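/- arXiv:2410.13519 — 5 statements merged into one kernel-verified Lean document; each statement's English description precedes it below -/
import Mathlib

section
/- If g ∈ GL(r,F) decomposes as g = n h n_- with n unipotent upper triangular, h diagonal, n_- unipotent lower triangular, then the superdiagonal entries of n are given by n_{i,i+1} = det((g_{k,ℓ})_{k ≥ i, k ≠ i+1, ℓ > i}) / det((g_{k,ℓ})_{k,ℓ > i}). -/
/-- upper triangular unipotent matrices -/
def UpperUnip {F : Type*} [Field F] {r : ℕ} (m : Matrix (Fin r) (Fin r) F) : Prop :=
  (∀ i, m i i = 1) ∧ ∀ i j : Fin r, j < i → m i j = 0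

/-- lower triangular unipotent matrices -/
def LowerUnip {F : Type*} [Field F] {r : ℕ} (m : Matrix (Fin r) (Fin r) F) : Prop :=
  (∀ i, m i i = 1) ∧ ∀ i j : Fin r, i < j → m i j = 0

/-- the lower right square submatrix `(g_{k,ℓ})_{k,ℓ ≥ i}` of `g`
(rows and columns with 0-based index `≥ i`) -/
def cornerBlock {F : Type*} [Field F] {r : ℕ} (g : Matrix (Fin r) (Fin r) F)
    (i : ℕ) : Matrix (Fin (r - i)) (Fin (r - i)) F :=
  fun k l => g ⟨i + (k : ℕ), by have := k.isLt; omega⟩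
               ⟨i + (l : ℕ), by have := l.isLt; omega⟩
/-- the square submatrix of `g` of size `r - (i+1)` with rows indexed by
`{i} ∪ {i+2, …, r-1}` and columns `{i+1, …, r-1}` (0-based) -/
def superNumBlock {F : Type*} [Field F] {r : ℕ} (g : Matrix (Fin r) (Fin r) F)
    (i : ℕ) : Matrix (Fin (r - (i + 1))) (Fin (r - (i + 1))) F :=
  fun k l => g ⟨if (k : ℕ) = 0 then i else i + (k : ℕ) + 1,
                 by have := k.isLt; split <;> omega⟩
               ⟨i + 1 + (l : ℕ), by have := l.isLt; omega⟩

section Aux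

variable {F : Type*} [Field F] {r : ℕ}

/-- submatrix with rows given by `σ` and columns `j, j+1, …, r-1`. -/
def shiftCol (g : Matrix (Fin r) (Fin r) F) (j : ℕ)
    (σ : Fin (r - j) → Fin r) : Matrix (Fin (r - j)) (Fin (r - j)) F :=
  fun k l => g (σ k) ⟨j + (l : ℕ), by have := l.isLt; omega⟩

lemma sum_shift {M : Type*} [AddCommMonoid M] (j : ℕ) (hj : j ≤ r) (f : Fin r → M)
    (hf : ∀ m : Fin r, (m : ℕ) < j → f m = 0) :
    ∑ m : Fin r, f m = ∑ m : Fin (r - j), f ⟨j + (m : ℕ), by have := m.isLt; omega⟩ := by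
  classical
  set F' : ℕ → M := fun m => if hm : m < r then f ⟨m, hm⟩ else 0 with hF'
  have h1 : ∑ m : Fin r, f m = ∑ m ∈ Finset.range r, F' m := by
    rw [Finset.sum_range fun m => F' m]
    apply Finset.sum_congr rfl
    intro m _
    simp [hF', m.isLt]
  have h2 : ∑ m : Fin (r - j), f ⟨j + (m : ℕ), by have := m.isLt; omega⟩
      = ∑ m ∈ Finset.range (r - j), F' (j + m) := by
    rw [Finset.sum_range fun m => F' (j + m)]
    apply Finset.sum_congr rfl
    intro m _
    have : j + (m : ℕ) < r := by have := m.isLt; omega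
    simp [hF', this]
  rw [h1, h2, ← Finset.sum_Ico_eq_sum_range]
  rw [Finset.range_eq_Ico, ← Finset.sum_Ico_consecutive _ (Nat.zero_le j) hj]
  have : ∑ m ∈ Finset.Ico 0 j, F' m = 0 := by
    apply Finset.sum_eq_zero
    intro m hm
    simp only [Finset.mem_Ico] at hm
    by_cases hmr : m < r
    · simp only [hF', dif_pos hmr]
      exact hf ⟨m, hmr⟩ hm.2
    · simp [hF', hmr]
  rw [this, zero_add]

lemma key (n h n' : Matrix (Fin r) (Fin r) F) (hh : h.IsDiag) (hn' : LowerUnip n')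
    (j : ℕ) (hj : j ≤ r) (σ : Fin (r - j) → Fin r) :
    shiftCol (n * h * n') j σ
      = shiftCol n j σ * cornerBlock h j * cornerBlock n' j := by
  have hcorner : cornerBlock h j
      = Matrix.diagonal (fun p : Fin (r - j) => h ⟨j + (p : ℕ), by have := p.isLt; omega⟩
          ⟨j + (p : ℕ), by have := p.isLt; omega⟩) := by
    ext p q
    by_cases hpq : p = q
    · subst hpq; simp [cornerBlock]
    · rw [Matrix.diagonal_apply_ne _ hpq]
      apply hh
      simp only [ne_eq, Fin.mk.injEq]
      intro hc
      exact hpq (Fin.ext (by omega))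
  have hfull : h = Matrix.diagonal (fun m => h m m) := (hh.diagonal_diag).symm
  ext k l
  rw [hcorner]
  simp only [shiftCol, Matrix.mul_assoc]
  conv_lhs => rw [hfull]
  simp only [Matrix.mul_apply, Matrix.diagonal_apply, ite_mul, zero_mul,
    Finset.sum_ite_eq, Finset.mem_univ, if_true]
  rw [sum_shift j hj (fun m => n (σ k) m * (h m m * n' m ⟨j + (l : ℕ), by have := l.isLt; omega⟩))
    (by
      intro m hm
      have hz : n' m ⟨j + (l : ℕ), by have := l.isLt; omega⟩ = 0 := by
        apply hn'.2
        simp only [Fin.lt_def]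
        omega
      simp [hz])]
  rfl

end Aux

section Dets
variable {F : Type*} [Field F] {r : ℕ}

lemma det_upper_corner (n : Matrix (Fin r) (Fin r) F) (hn : UpperUnip n) (j : ℕ) :
    (shiftCol n j (fun k => ⟨j + (k : ℕ), by have := k.isLt; omega⟩)).det = 1 := by
  rw [Matrix.det_of_upperTriangular]
  · apply Finset.prod_eq_one
    intro k _
    exact hn.1 _
  · intro a b hba
    apply hn.2
    simp only [Fin.lt_def]
    simp only [id] at hba
    rw [Fin.lt_def] at hba
    omega

lemma det_lower_corner (n' : Matrix (Fin r) (Fin r) F) (hn' : LowerUnip n') (j : ℕ) :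
    (cornerBlock n' j).det = 1 := by
  rw [Matrix.det_of_lowerTriangular]
  · apply Finset.prod_eq_one
    intro k _
    exact hn'.1 _
  · intro a b hab
    apply hn'.2
    simp only [Fin.lt_def]
    have h1 : a < b := hab
    rw [Fin.lt_def] at h1
    omega

lemma det_num_block (n : Matrix (Fin r) (Fin r) F) (hn : UpperUnip n) (i : ℕ)
    (hi : i + 1 < r) :
    (shiftCol n (i + 1) (fun k => ⟨if (k : ℕ) = 0 then i else i + (k : ℕ) + 1,
        by have := k.isLt; split <;> omega⟩)).det
      = n ⟨i, Nat.lt_of_succ_lt hi⟩ ⟨i + 1, hi⟩ := by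
  rw [Matrix.det_of_upperTriangular]
  · rw [Fintype.prod_eq_single (⟨0, by omega⟩ : Fin (r - (i + 1)))]
    · simp [shiftCol]
    · intro k hk
      have hk0 : (k : ℕ) ≠ 0 := fun hc => hk (Fin.ext hc)
      simp only [shiftCol, hk0, if_false]
      simp only [show i + (k : ℕ) + 1 = i + 1 + (k : ℕ) from by omega]
      exact hn.1 _
  · intro a b hba
    simp only [id] at hba
    rw [Fin.lt_def] at hba
    apply hn.2
    simp only [Fin.lt_def]
    split <;> omega

lemma h_corner_det (h : Matrix (Fin r) (Fin r) F) (hh : h.IsDiag) (j : ℕ) :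
    (cornerBlock h j).det
      = ∏ p : Fin (r - j), h ⟨j + (p : ℕ), by have := p.isLt; omega⟩
          ⟨j + (p : ℕ), by have := p.isLt; omega⟩ := by
  have hcorner : cornerBlock h j
      = Matrix.diagonal (fun p : Fin (r - j) => h ⟨j + (p : ℕ), by have := p.isLt; omega⟩
          ⟨j + (p : ℕ), by have := p.isLt; omega⟩) := by
    ext p q
    by_cases hpq : p = q
    · subst hpq; simp [cornerBlock]
    · rw [Matrix.diagonal_apply_ne _ hpq]
      apply hh
      simp only [ne_eq, Fin.mk.injEq]
      intro hc
      exact hpq (Fin.ext (by omega))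
  rw [hcorner, Matrix.det_diagonal]

end Dets

/-- If `g = n h n_-` is a UDL decomposition, the superdiagonal entries of `n`
are given by `n_{i,i+1} = det((g_{k,ℓ})_{k ≥ i, k ≠ i+1, ℓ > i}) /
det((g_{k,ℓ})_{k,ℓ > i})`. -/
theorem UDL_superdiagonal_formula {F : Type*} [Field F] {r : ℕ}
    (g n h n' : Matrix (Fin r) (Fin r) F) (hg : IsUnit g.det)
    (hn : UpperUnip n) (hh : h.IsDiag) (hn' : LowerUnip n')
    (hdec : g = n * h * n') :
    ∀ i : ℕ, ∀ hi : i + 1 < r,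
      n ⟨i, by omega⟩ ⟨i + 1, hi⟩ =
        (superNumBlock g i).det / (cornerBlock g (i + 1)).det := by
  intro i hi
  have hj : i + 1 ≤ r := by omega
  -- determinants of the full triangular factors
  have hdetn : n.det = 1 := by
    rw [Matrix.det_of_upperTriangular (fun a b hba => hn.2 a b hba)]
    exact Finset.prod_eq_one fun k _ => hn.1 k
  have hdetn' : n'.det = 1 := by
    rw [Matrix.det_of_lowerTriangular n'
      (fun a b hab => hn'.2 a b (OrderDual.toDual_lt_toDual.mp hab))]
    exact Finset.prod_eq_one fun k _ => hn'.1 k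
  have hdeth : h.det = ∏ m, h m m := by
    conv_lhs => rw [← hh.diagonal_diag]
    rw [Matrix.det_diagonal]
    rfl
  have hgne : g.det ≠ 0 := hg.ne_zero
  have hne : ∀ m : Fin r, h m m ≠ 0 := by
    rw [hdec, Matrix.det_mul, Matrix.det_mul, hdetn, hdetn', hdeth, one_mul, mul_one] at hgne
    intro m
    exact Finset.prod_ne_zero_iff.mp hgne m (Finset.mem_univ m)
  have hBne : (cornerBlock h (i + 1)).det ≠ 0 := by
    rw [h_corner_det h hh (i + 1)]
    exact Finset.prod_ne_zero_iff.mpr fun p _ => hne _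
  have e1 : superNumBlock g i
      = shiftCol g (i + 1) (fun k => ⟨if (k : ℕ) = 0 then i else i + (k : ℕ) + 1,
          by have := k.isLt; split <;> omega⟩) := rfl
  have e2 : cornerBlock g (i + 1)
      = shiftCol g (i + 1) (fun k => ⟨i + 1 + (k : ℕ), by have := k.isLt; omega⟩) := rfl
  rw [e1, e2, hdec, key n h n' hh hn' (i + 1) hj, key n h n' hh hn' (i + 1) hj,
    Matrix.det_mul, Matrix.det_mul, Matrix.det_mul, Matrix.det_mul,
    det_num_block n hn i hi, det_lower_corner n' hn' (i + 1),
    det_upper_corner n hn (i + 1), mul_one, mul_one, one_mul]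
  rw [mul_div_assoc, div_self hBne, mul_one]
end

section
/- An invertible r×r matrix g over a field F admits a decomposition g = n h n_- with n unipotent upper triangular, h invertible diagonal, n_- unipotent lower triangular if and only if every lower-right square submatrix (g_{k,ℓ})_{k,ℓ ≥ i}, 1 ≤ i ≤ r, has nonzero determinant. -/
/-! If `g = n h n₋` with `n` upper and `n₋` lower unitriangular, the triangular shapes kill all
cross terms, so each lower-right corner of `g` is the product of the corresponding corners of
`n`, `h`, `n₋`, and its determinant is a product of diagonal entries of `h`.

Conversely, induct on the size. If the lower-right block `G` of `g` (all rows and columns but the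
first) is `N H N₋`, then eliminating the first row and column of `g` against `G` writes `g` as a
product of `N`, `H`, `N₋` bordered by a new first row or column, the new diagonal entry being the
Schur complement `d` of `G`. Then `det g = d · det H`, so `d ≠ 0`, and the corner determinants of
`G` are those of `g` shifted by one. -/

open Matrix

section Bordered

variable {R : Type*} {n : ℕ}

def bordered (a : R) (b c : Fin n → R) (M : Matrix (Fin n) (Fin n) R) :
    Matrix (Fin (n + 1)) (Fin (n + 1)) R :=
  Matrix.of fun k l => Fin.cases (Fin.cases a b l) (fun k' => Fin.cases (c k') (M k') l) k

variable {a : R} {b c : Fin n → R} {M : Matrix (Fin n) (Fin n) R}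

@[simp] theorem bordered_zero_zero : bordered a b c M 0 0 = a := rfl
@[simp] theorem bordered_zero_succ (l : Fin n) : bordered a b c M 0 l.succ = b l := rfl
@[simp] theorem bordered_succ_zero (k : Fin n) : bordered a b c M k.succ 0 = c k := rfl
@[simp] theorem bordered_succ_succ (k l : Fin n) : bordered a b c M k.succ l.succ = M k l := rfl

theorem bordered_eta (g : Matrix (Fin (n + 1)) (Fin (n + 1)) R) :
    bordered (g 0 0) (fun l => g 0 l.succ) (fun k => g k.succ 0) (g.submatrix Fin.succ Fin.succ) =
      g := by
  ext k l
  cases k using Fin.cases <;> cases l using Fin.cases <;> rfl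

theorem bordered_mul [CommSemiring R] (a' : R) (b' c' : Fin n → R)
    (M' : Matrix (Fin n) (Fin n) R) :
    bordered a b c M * bordered a' b' c' M' =
      bordered (a * a' + b ⬝ᵥ c') (a • b' + b ᵥ* M') (a' • c + M *ᵥ c')
        (vecMulVec c b' + M * M') := by
  ext k l
  cases k using Fin.cases <;> cases l using Fin.cases <;>
    simp [mul_apply, Fin.sum_univ_succ, vecMulVec_apply, dotProduct, mulVec, vecMul, mul_comm]

theorem exists_bordered_mul_eq [CommRing R] (a : R) (b c : Fin n → R)
    {N H N' : Matrix (Fin n) (Fin n) R}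
    (hNH : IsUnit (N * H).det) (hHN' : IsUnit (H * N').det) :
    ∃ d u v,
      bordered 1 u 0 N * bordered d 0 0 H * bordered 1 0 v N' = bordered a b c (N * H * N') := by
  set u := b ᵥ* (H * N')⁻¹
  set v := (N * H)⁻¹ *ᵥ c
  -- `a - (u ᵥ* H) ⬝ᵥ v = a - b ᵥ* (N * H * N')⁻¹ ⬝ᵥ c` is the Schur complement.
  refine ⟨a - (u ᵥ* H) ⬝ᵥ v, u, v, ?_⟩
  have hu : u ᵥ* (H * N') = b := by
    rw [vecMul_vecMul, nonsing_inv_mul _ hHN', vecMul_one]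
  have hv : (N * H) *ᵥ v = c := by
    rw [mulVec_mulVec, mul_nonsing_inv _ hNH, one_mulVec]
  rw [bordered_mul, bordered_mul]
  simp only [one_mul, mul_one, dotProduct_zero, add_zero, zero_add,
    smul_zero, mulVec_zero, zero_vecMulVec, vecMul_vecMul, hu, hv, sub_add_cancel]

end Bordered

section

variable {F : Type*} [Field F] {r : ℕ}

theorem UpperUnip.isUpperTriangular {n : Matrix (Fin r) (Fin r) F} (hn : UpperUnip n) :
    n.IsUpperTriangular :=
  fun i j hij => hn.2 i j hij

theorem LowerUnip.isLowerTriangular {n : Matrix (Fin r) (Fin r) F} (hn : LowerUnip n) :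
    n.IsLowerTriangular :=
  fun i j hij => hn.2 i j hij

theorem UpperUnip.det_eq_one {n : Matrix (Fin r) (Fin r) F} (hn : UpperUnip n) : n.det = 1 := by
  simp [det_of_isUpperTriangular hn.isUpperTriangular, hn.1]

theorem LowerUnip.det_eq_one {n : Matrix (Fin r) (Fin r) F} (hn : LowerUnip n) : n.det = 1 := by
  simp [det_of_isLowerTriangular n hn.isLowerTriangular, hn.1]

theorem Matrix.IsDiag.det_eq_prod_diag {R n : Type*} [CommRing R] [Fintype n] [DecidableEq n]
    {h : Matrix n n R} (hh : h.IsDiag) : h.det = ∏ j, h j j := by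
  conv_lhs => rw [← hh.diagonal_diag]
  exact det_diagonal

def cornerEmb (r i : ℕ) : Fin (r - i) → Fin r :=
  fun q => ⟨i + q, by omega⟩

theorem cornerEmb_strictMono (r i : ℕ) : StrictMono (cornerEmb r i) :=
  fun _ _ hpq => Nat.add_lt_add_left hpq i

theorem cornerBlock_eq_submatrix (g : Matrix (Fin r) (Fin r) F) (i : ℕ) :
    cornerBlock g i = g.submatrix (cornerEmb r i) (cornerEmb r i) :=
  rfl

theorem cornerBlock_transpose (g : Matrix (Fin r) (Fin r) F) (i : ℕ) :
    cornerBlock gᵀ i = (cornerBlock g i)ᵀ :=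
  rfl

theorem cornerBlock_mul_of_isUpperTriangular {A : Matrix (Fin r) (Fin r) F}
    (hA : A.IsUpperTriangular) (B : Matrix (Fin r) (Fin r) F) (i : ℕ) :
    cornerBlock (A * B) i = cornerBlock A i * cornerBlock B i := by
  ext k l
  refine (Fintype.sum_of_injective _ (cornerEmb_strictMono r i).injective _ _ (fun p hp => ?_)
    fun _ => rfl).symm
  have hpi : (p : ℕ) < i := by
    by_contra! hip
    exact hp ⟨⟨p - i, by omega⟩, Fin.ext (by simp [cornerEmb]; omega)⟩
  exact mul_eq_zero_of_left (hA (show p < cornerEmb r i k from Fin.mk_lt_mk.2 (by omega))) _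

theorem cornerBlock_mul_of_isLowerTriangular (A : Matrix (Fin r) (Fin r) F)
    {B : Matrix (Fin r) (Fin r) F} (hB : B.IsLowerTriangular) (i : ℕ) :
    cornerBlock (A * B) i = cornerBlock A i * cornerBlock B i := by
  rw [← transpose_transpose (A * B), transpose_mul, cornerBlock_transpose,
    cornerBlock_mul_of_isUpperTriangular hB.transpose, transpose_mul, ← cornerBlock_transpose,
    ← cornerBlock_transpose, transpose_transpose, transpose_transpose]

theorem UpperUnip.cornerBlock {n : Matrix (Fin r) (Fin r) F} (hn : UpperUnip n) (i : ℕ) :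
    UpperUnip (cornerBlock n i) :=
  ⟨fun _ => hn.1 _, fun _ _ hkl => hn.2 _ _ (cornerEmb_strictMono r i hkl)⟩

theorem LowerUnip.cornerBlock {n : Matrix (Fin r) (Fin r) F} (hn : LowerUnip n) (i : ℕ) :
    LowerUnip (cornerBlock n i) :=
  ⟨fun _ => hn.1 _, fun _ _ hkl => hn.2 _ _ (cornerEmb_strictMono r i hkl)⟩

theorem Matrix.IsDiag.cornerBlock {h : Matrix (Fin r) (Fin r) F} (hh : h.IsDiag) (i : ℕ) :
    (cornerBlock h i).IsDiag :=
  cornerBlock_eq_submatrix h i ▸ hh.submatrix (cornerEmb_strictMono r i).injective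

theorem det_cornerBlock_zero (g : Matrix (Fin r) (Fin r) F) : (cornerBlock g 0).det = g.det := by
  have hsub :
      cornerBlock g 0 = g.submatrix (finCongr (Nat.sub_zero r)) (finCongr (Nat.sub_zero r)) := by
    ext k l
    simp only [cornerBlock, submatrix_apply, finCongr_apply]
    congr 1 <;> exact Fin.ext (by simp)
  rw [hsub, det_submatrix_equiv_self]

theorem det_cornerBlock_submatrix_succ (g : Matrix (Fin (r + 1)) (Fin (r + 1)) F) (i : ℕ) :
    (cornerBlock (g.submatrix Fin.succ Fin.succ) i).det = (cornerBlock g (i + 1)).det := by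
  have hri : r + 1 - (i + 1) = r - i := by omega
  have hsub : cornerBlock g (i + 1) =
      (cornerBlock (g.submatrix Fin.succ Fin.succ) i).submatrix (finCongr hri) (finCongr hri) := by
    ext k l
    simp only [cornerBlock, submatrix_apply, finCongr_apply]
    congr 1 <;> exact Fin.ext (by simp; omega)
  rw [hsub, det_submatrix_equiv_self]

def HasUDL (g : Matrix (Fin r) (Fin r) F) : Prop :=
  ∃ n h n' : Matrix (Fin r) (Fin r) F, UpperUnip n ∧ h.IsDiag ∧ IsUnit h.det ∧ LowerUnip n' ∧
    g = n * h * n'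

theorem HasUDL.det_cornerBlock_ne_zero {g : Matrix (Fin r) (Fin r) F} (hg : HasUDL g) (i : ℕ) :
    (cornerBlock g i).det ≠ 0 := by
  obtain ⟨n, h, n', hn, hh, hdet, hn', rfl⟩ := hg
  have hdiag : ∀ j, h j j ≠ 0 := by
    rw [hh.det_eq_prod_diag, isUnit_iff_ne_zero, Finset.prod_ne_zero_iff] at hdet
    exact fun j => hdet j (Finset.mem_univ j)
  rw [cornerBlock_mul_of_isLowerTriangular _ hn'.isLowerTriangular,
    cornerBlock_mul_of_isUpperTriangular hn.isUpperTriangular, det_mul, det_mul,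
    (hn.cornerBlock i).det_eq_one, (hn'.cornerBlock i).det_eq_one, one_mul, mul_one,
    (hh.cornerBlock i).det_eq_prod_diag]
  exact Finset.prod_ne_zero_iff.2 fun _ _ => hdiag _

end


section

variable {F : Type*} [Field F] {r : ℕ}

theorem UpperUnip.bordered {N : Matrix (Fin r) (Fin r) F} (hN : UpperUnip N) (u : Fin r → F) :
    UpperUnip (bordered 1 u 0 N) := by
  refine ⟨fun i => ?_, fun i j hji => ?_⟩
  · cases i using Fin.cases
    exacts [rfl, hN.1 _]
  · cases i using Fin.cases with
    | zero => exact absurd hji (Fin.not_lt_zero j)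
    | succ k =>
      cases j using Fin.cases
      exacts [rfl, hN.2 _ _ (Fin.succ_lt_succ_iff.1 hji)]

theorem LowerUnip.bordered {N : Matrix (Fin r) (Fin r) F} (hN : LowerUnip N) (v : Fin r → F) :
    LowerUnip (bordered 1 0 v N) := by
  refine ⟨fun i => ?_, fun i j hij => ?_⟩
  · cases i using Fin.cases
    exacts [rfl, hN.1 _]
  · cases j using Fin.cases with
    | zero => exact absurd hij (Fin.not_lt_zero i)
    | succ l =>
      cases i using Fin.cases
      exacts [rfl, hN.2 _ _ (Fin.succ_lt_succ_iff.1 hij)]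

theorem Matrix.IsDiag.bordered {H : Matrix (Fin r) (Fin r) F} (hH : H.IsDiag) (d : F) :
    (bordered d 0 0 H).IsDiag := by
  intro i j hij
  cases i using Fin.cases <;> cases j using Fin.cases
  · exact absurd rfl hij
  · rfl
  · rfl
  · exact hH (ne_of_apply_ne Fin.succ hij)

theorem HasUDL.of_submatrix_succ {g : Matrix (Fin (r + 1)) (Fin (r + 1)) F}
    (hG : HasUDL (g.submatrix Fin.succ Fin.succ)) (hg : g.det ≠ 0) : HasUDL g := by
  obtain ⟨N, H, N', hN, hH, hHdet, hN', hG⟩ := hG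
  obtain ⟨d, u, v, hfac⟩ := exists_bordered_mul_eq (g 0 0) (fun l => g 0 l.succ)
    (fun k => g k.succ 0) (N := N) (H := H) (N' := N')
    (by rwa [det_mul, hN.det_eq_one, one_mul]) (by rwa [det_mul, hN'.det_eq_one, mul_one])
  rw [← hG, bordered_eta] at hfac
  have hdet : g.det = (bordered d 0 0 H).det := by
    rw [← hfac, det_mul, det_mul, (hN.bordered u).det_eq_one, (hN'.bordered v).det_eq_one,
      one_mul, mul_one]
  exact ⟨_, _, _, hN.bordered u, hH.bordered d, isUnit_iff_ne_zero.2 (hdet ▸ hg),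
    hN'.bordered v, hfac.symm⟩

theorem hasUDL_of_det_cornerBlock_ne_zero (g : Matrix (Fin r) (Fin r) F)
    (hg : ∀ i : Fin r, (cornerBlock g i).det ≠ 0) : HasUDL g := by
  induction r with
  | zero =>
    exact ⟨1, 1, 1, ⟨finZeroElim, finZeroElim⟩, isDiag_one, by simp, ⟨finZeroElim, finZeroElim⟩,
      Subsingleton.elim _ _⟩
  | succ r ih =>
    refine HasUDL.of_submatrix_succ (ih _ fun i => ?_) (det_cornerBlock_zero g ▸ hg 0)
    rw [det_cornerBlock_submatrix_succ]
    exact hg i.succ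

end

theorem UDL_exists_iff_corner_dets_ne_zero_general {F : Type*} [Field F] {r : ℕ}
    (g : Matrix (Fin r) (Fin r) F) :
    (∃ n h n' : Matrix (Fin r) (Fin r) F, UpperUnip n ∧ h.IsDiag ∧
        IsUnit h.det ∧ LowerUnip n' ∧ g = n * h * n') ↔
      ∀ i : Fin r, (cornerBlock g (i : ℕ)).det ≠ 0 :=
  ⟨fun hg i => HasUDL.det_cornerBlock_ne_zero hg i, hasUDL_of_det_cornerBlock_ne_zero g⟩

/-- An invertible matrix `g` admits a UDL decomposition `g = n h n_-`
(`n` unipotent upper triangular, `h` invertible diagonal, `n_-` unipotent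
lower triangular) if and only if every lower-right corner block of `g` has
nonzero determinant. -/
theorem UDL_exists_iff_corner_dets_ne_zero {F : Type*} [Field F] {r : ℕ}
    (g : Matrix (Fin r) (Fin r) F) (hg : IsUnit g.det) :
    (∃ n h n' : Matrix (Fin r) (Fin r) F, UpperUnip n ∧ h.IsDiag ∧
        IsUnit h.det ∧ LowerUnip n' ∧ g = n * h * n') ↔
      ∀ i : Fin r, (cornerBlock g (i : ℕ)).det ≠ 0 :=
  UDL_exists_iff_corner_dets_ne_zero_general g
end

section
/- Let w₁ be the 4×4 permutation matrix of the permutation π with π(1)=2, π(2)=4, π(3)=3, π(4)=1, and let n₁₂, n₁₃, n₁₄, n₃₄ be nonzero elements of a field F. Define the matrix wu with rows (0,1,0,0), (0,0,0,1), (0,0,1,n₃₄), (1, n₁₂n₁₃n₁₄, (n₁₃n₁₄+n₃₄n₁₄)/n₃₄, n₁₄n₃₄). Then wu = x·b where x is the unipotent upper triangular matrix with x₁₂ = 1/n₁₂, x₂₃ = 1/n₃₄ + 1/n₁₃, x₂₄ = 1/(n₁₄n₃₄), x₃₄ = 1/n₁₄, x₁₃ = x₁₄ = 0, and b is a lower triangular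 matrix with diagonal entries (−1/(n₁₂n₁₃n₁₄), n₁₂, −n₁₃/n₃₄, n₁₄n₃₄). -/
/-- The explicit UDL-type factorization `wu = x · b` for the Weyl element of
`GL(4)` with `π = (2,4,3,1)` after the change of variables `R`. -/
theorem example_wu_eq_x_mul_b {F : Type*} [Field F] [CharZero F]
    (n12 n13 n14 n34 : F)
    (h12 : n12 ≠ 0) (h13 : n13 ≠ 0) (h14 : n14 ≠ 0) (h34 : n34 ≠ 0) :
    ∃ b : Matrix (Fin 4) (Fin 4) F,
      (∀ i j : Fin 4, i < j → b i j = 0) ∧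
      b 0 0 = -(1 / (n12 * n13 * n14)) ∧
      b 1 1 = n12 ∧
      b 2 2 = -(n13 / n34) ∧
      b 3 3 = n14 * n34 ∧
      (!![0, 1, 0, 0;
          0, 0, 0, 1;
          0, 0, 1, n34;
          1, n12 * n13 * n14, (n13 * n14 + n34 * n14) / n34, n14 * n34] : Matrix (Fin 4) (Fin 4) F) =
        (!![1, 1 / n12, 0, 0;
            0, 1, 1 / n34 + 1 / n13, 1 / (n14 * n34);
            0, 0, 1, 1 / n14;
            0, 0, 0, 1] : Matrix (Fin 4) (Fin 4) F) * b := by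
  refine ⟨!![-(1 / (n12 * n13 * n14)), 0, 0, 0;
             1 / (n13 * n14), n12, 0, 0;
             -(1 / n14), -(n12 * n13), -(n13 / n34), 0;
             1, n12 * n13 * n14, (n13 * n14 + n34 * n14) / n34, n14 * n34], ?_, by norm_num,
          by norm_num, by rfl, by rfl, ?_⟩
  · intro i j hij
    fin_cases i <;> fin_cases j <;> simp_all <;> omega
  · ext i j
    fin_cases i <;> fin_cases j <;>
      simp [Matrix.mul_apply, Fin.sum_univ_four] <;>
      field_simp <;> ring
end

section
/- Let n_{π(d),j} be a free variable of wn with set of 'type-1' origins O₁(n_{π(d),j}) = {n_{π(δ₁),r}, ..., n_{π(δ_s),r}} and corresponding destinations D₁(n_{π(d),j}) = {1_{π(δ₁)}, ..., 1_{π(δ_s)}}. Then P₁(n_{π(d),j}) = Σ_{m=1}^{s} P({n_{π(δ_m−1),r}} ∪ O_{↑,δ_m−1}(n_{π(d),j}) → D_{↑,δ_m−1}(n_{π(d),j})) · n_{π(δ_m),r} · P_L(O_{↓,δ_m+1}(n_{π(d),j}) → D_{↓,δ_m}(n_{π(d),j})), where the empty sum is 0. -/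
open Finset

/-- positions (row, column) in the matrix `wn`, 0-indexed -/
abbrev Pos (r : ℕ) := Fin r × Fin r

/-- the entry of `wn` at position `p` is nonzero: it is the `1` of its
column (`p.2 = π p.1`) or a free variable. -/
abbrev IsNonzero {r : ℕ} (π : Equiv.Perm (Fin r)) (p : Pos r) : Prop :=
  p.2 = π p.1 ∨ (π p.1 < p.2 ∧ π.symm p.2 < p.1)

/-- the entry of `wn` at position `p` is a free variable, i.e.
`(π p.1, p.2) ∈ Inv (π⁻¹)` -/
abbrev IsFree {r : ℕ} (π : Equiv.Perm (Fin r)) (p : Pos r) : Prop :=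
  π p.1 < p.2 ∧ π.symm p.2 < p.1

/-- a step of a path: move left or up to the neighboring nonzero entry -/
def Step {r : ℕ} (π : Equiv.Perm (Fin r)) (x y : Pos r) : Prop :=
  (x.1 = y.1 ∧ y.2 < x.2 ∧ IsNonzero π y ∧
      ∀ c : Fin r, y.2 < c → c < x.2 → ¬ IsNonzero π (x.1, c)) ∨
  (x.2 = y.2 ∧ y.1 < x.1 ∧ IsNonzero π y ∧
      ∀ a : Fin r, y.1 < a → a < x.1 → ¬ IsNonzero π (a, x.2))

/-- a path: a nonempty list of nonzero entries, each step going up or left to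
a neighboring nonzero entry.  The head is the origin, the last entry the
destination. -/
def IsPath {r : ℕ} (π : Equiv.Perm (Fin r)) (l : List (Pos r)) : Prop :=
  l ≠ [] ∧ (∀ x ∈ l, IsNonzero π x) ∧ l.Chain' (Step π)

/-- `S` is a set of pairwise disjoint paths connecting `A` bijectively to `B`,
i.e. `S ∈ 𝒫(A → B)` -/
def Conn {r : ℕ} (π : Equiv.Perm (Fin r)) (A B : Finset (Pos r))
    (S : Finset (List (Pos r))) : Prop :=
  (∀ l ∈ S, IsPath π l) ∧
  (∀ l ∈ S, ∀ l' ∈ S, l ≠ l' → ∀ x ∈ l, x ∉ l') ∧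
  (∀ a, a ∈ A ↔ ∃ l ∈ S, l.head? = some a) ∧
  (∀ b, b ∈ B ↔ ∃ l ∈ S, l.getLast? = some b)

/-- the monomial given by the product of the free variables traversed by a
path, in `ℤ[{n_α}]` -/
noncomputable def uPath {r : ℕ} (π : Equiv.Perm (Fin r)) (l : List (Pos r)) :
    MvPolynomial (Pos r) ℤ :=
  ∏ x ∈ l.toFinset.filter (fun x => IsFree π x), MvPolynomial.X x

/-- `u(S)` for a set of disjoint paths `S` -/
noncomputable def uSet {r : ℕ} (π : Equiv.Perm (Fin r))
    (S : Finset (List (Pos r))) : MvPolynomial (Pos r) ℤ :=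
  ∏ l ∈ S, uPath π l

/-- `P(A → B)`: sum of `u(S)` over all sets of disjoint paths connecting
`A` to `B` -/
noncomputable def Psum {r : ℕ} (π : Equiv.Perm (Fin r)) (A B : Finset (Pos r)) :
    MvPolynomial (Pos r) ℤ :=
  ∑ᶠ S ∈ {S : Finset (List (Pos r)) | Conn π A B S}, uSet π S

/-- every positive-length path whose origin lies in the rightmost column
starts by going left -/
def StartsLeft (r : ℕ) (l : List (Pos r)) : Prop :=
  ∀ x ∈ l.head?, (x.2 : ℕ) = r - 1 → ∀ y ∈ l.tail.head?, y.1 = x.1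

/-- `P_L(A → B)` -/
noncomputable def PLsum {r : ℕ} (π : Equiv.Perm (Fin r))
    (A B : Finset (Pos r)) : MvPolynomial (Pos r) ℤ :=
  ∑ᶠ S ∈ {S : Finset (List (Pos r)) | Conn π A B S ∧ ∀ l ∈ S, StartsLeft r l},
    uSet π S

/-- the column of the rightmost nonzero entry of row `a` -/
def gammaCol {r : ℕ} (π : Equiv.Perm (Fin r)) (a : Fin r) : Fin r :=
  (Finset.univ.filter fun c => IsNonzero π (a, c)).max'
    ⟨π a, Finset.mem_filter.2 ⟨Finset.mem_univ _, Or.inl rfl⟩⟩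

/-- `γ(row a)`: the rightmost nonzero entry of row `a`, as a position -/
def gammaPos {r : ℕ} (π : Equiv.Perm (Fin r)) (a : Fin r) : Pos r :=
  (a, gammaCol π a)

/-- `ρ(row a)`: the product of the nonzero entries (equivalently, of the free
variables) of row `a` -/
noncomputable def rho {r : ℕ} (π : Equiv.Perm (Fin r)) (a : Fin r) :
    MvPolynomial (Pos r) ℤ :=
  ∏ c ∈ Finset.univ.filter (fun c => IsFree π (a, c)),
    MvPolynomial.X ((a, c) : Pos r)
/-- the last (rightmost column / bottom row) index -/
def lastIdx (r : ℕ) [NeZero r] : Fin r :=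
  ⟨r - 1, by have := Nat.pos_of_ne_zero (NeZero.ne r); omega⟩

/-- rows of the submatrix `M_w(n_{π(d),j})` containing a `1`:
rows `a` with `π⁻¹(j) ≤ a ≤ d` whose `1` lies in column `≥ j` -/
def destRows {r : ℕ} (π : Equiv.Perm (Fin r)) (d j : Fin r) : Finset (Fin r) :=
  Finset.univ.filter fun a => π.symm j ≤ a ∧ a ≤ d ∧ j ≤ π a

/-- `D(n_{π(d),j})`: the destinations of the free variable at position `(d,j)` -/
def Dest {r : ℕ} (π : Equiv.Perm (Fin r)) (d j : Fin r) : Finset (Pos r) :=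
  (destRows π d j).image fun a => (a, π a)

/-- `O(n_{π(d),j})`: the origins — the rightmost nonzero entry of the bottom
row `d`, and the rightmost nonzero entries of the rows containing a
destination other than the top destination `1_j` -/
def Orig {r : ℕ} (π : Equiv.Perm (Fin r)) (d j : Fin r) : Finset (Pos r) :=
  insert (gammaPos π d) (((destRows π d j).erase (π.symm j)).image (gammaPos π))

/-- `O₁(n_{π(d),j})`: origins in the rightmost column, above the bottom
origin, lying directly below a free variable which is not an origin -/
def O1 {r : ℕ} (π : Equiv.Perm (Fin r)) (d j : Fin r) : Finset (Pos r) :=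
  (Orig π d j).filter fun x =>
    (x.2 : ℕ) = r - 1 ∧ x.1 < d ∧
      ∃ t : Fin r, (t : ℕ) + 1 = (x.1 : ℕ) ∧ IsFree π (t, x.2) ∧
        (t, x.2) ∉ Orig π d j

/-- `D₁(n_{π(d),j})`: destinations in the rows containing an element of `O₁` -/
def D1 {r : ℕ} (π : Equiv.Perm (Fin r)) (d j : Fin r) : Finset (Pos r) :=
  (Dest π d j).filter fun y => ∃ x ∈ O1 π d j, x.1 = y.1

/-- `D_{↗,l}(n_{π(d),j})`: destinations equal to `1_l` or above and to the
right of `1_l` -/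
def Dne {r : ℕ} (π : Equiv.Perm (Fin r)) (d j l : Fin r) : Finset (Pos r) :=
  (Dest π d j).filter fun y =>
    y = ((π.symm l, l) : Pos r) ∨ (y.1 < π.symm l ∧ l < y.2)
/-- a path of positive length whose origin lies in the rightmost column and
which starts by going up -/
def StartsUp (r : ℕ) (l : List (Pos r)) : Prop :=
  ∃ x, l.head? = some x ∧ (x.2 : ℕ) = r - 1 ∧
    ∃ y, l.tail.head? = some y ∧ y.2 = x.2

/-- `P₁(n_{π(d),j})`: the sum of `u(S)` over the sets `S` of disjoint paths
from `O(n_{π(d),j})` to `D(n_{π(d),j})` in which the path from the bottom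
origin starts by going left, while some path from a rightmost-column origin
starts by going up -/
noncomputable def P1sum {r : ℕ} (π : Equiv.Perm (Fin r)) (d j : Fin r) :
    MvPolynomial (Pos r) ℤ :=
  ∑ᶠ S ∈ {S : Finset (List (Pos r)) |
      Conn π (Orig π d j) (Dest π d j) S ∧
      (∃ l ∈ S, StartsUp r l) ∧
      ∀ l ∈ S, l.head? = some (gammaPos π d) →
        ∀ y ∈ l.tail.head?, y.1 = (gammaPos π d).1},
    uSet π S


/-! ### Auxiliary infrastructure -/

section Aux
open List
set_option linter.unusedSectionVars false

variable {r : ℕ} {π : Equiv.Perm (Fin r)}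

/-- the weak "up-left" order on positions -/
private def URel : Pos r → Pos r → Prop := fun x y =>
  y.1 ≤ x.1 ∧ y.2 ≤ x.2 ∧ (y.1 : ℕ) + (y.2 : ℕ) < (x.1 : ℕ) + (x.2 : ℕ)

private instance : IsTrans (Pos r) URel :=
  ⟨fun _ _ _ hab hbc => ⟨hbc.1.trans hab.1, hbc.2.1.trans hab.2.1, hbc.2.2.trans hab.2.2⟩⟩

private lemma Step.urel {x y : Pos r} (h : Step π x y) : URel x y := by
  rcases h with ⟨h1, h2, -⟩ | ⟨h1, h2, -⟩
  · refine ⟨le_of_eq h1.symm, le_of_lt h2, ?_⟩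
    have e : (x.1 : ℕ) = y.1 := by rw [h1]
    have e2 : (y.2 : ℕ) < x.2 := h2
    omega
  · refine ⟨le_of_lt h2, le_of_eq h1.symm, ?_⟩
    have e : (x.2 : ℕ) = y.2 := by rw [h1]
    have e2 : (y.1 : ℕ) < x.1 := h2
    omega

private lemma IsPath.pairwise {l : List (Pos r)} (h : IsPath π l) : l.Pairwise URel :=
  List.isChain_iff_pairwise.mp (h.2.2.imp fun _ _ hs => Step.urel hs)

private lemma IsPath.nodup {l : List (Pos r)} (h : IsPath π l) : l.Nodup :=
  h.pairwise.imp fun {a b} hab => by rintro rfl; exact absurd hab.2.2 (lt_irrefl _)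

private lemma IsPath.tail {l : List (Pos r)} (h : IsPath π l) (ht : l.tail ≠ []) :
    IsPath π l.tail :=
  ⟨ht, fun x hx => h.2.1 x (List.mem_of_mem_tail hx), h.2.2.tail⟩

variable [NeZero r]

private instance : Inhabited (Fin r) := ⟨⟨0, Nat.pos_of_ne_zero (NeZero.ne r)⟩⟩

private lemma head?_eq {l : List (Pos r)} (h : l ≠ []) : l.head? = some l.headI := by
  cases l with
  | nil => exact absurd rfl h
  | cons a t => rfl

private lemma getLast?_eq {l : List (Pos r)} (h : l ≠ []) : l.getLast? = some l.getLastI := by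
  simp [List.getLastI_eq_getLast?, List.getLast?_eq_getLast h]

private lemma headI_mem_self {l : List (Pos r)} (h : l ≠ []) : l.headI ∈ l :=
  List.mem_of_mem_head? (by rw [head?_eq h]; rfl)

private lemma getLastI_mem_self {l : List (Pos r)} (h : l ≠ []) : l.getLastI ∈ l :=
  List.mem_of_mem_getLast? (by rw [getLast?_eq h]; rfl)

private lemma headI_cons_tail {l : List (Pos r)} (h : l ≠ []) : l.headI :: l.tail = l := by
  cases l with
  | nil => exact absurd rfl h
  | cons a t => rfl

private lemma getLastI_tail {l : List (Pos r)} (h : l.tail ≠ []) :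
    l.tail.getLastI = l.getLastI := by
  cases l with
  | nil => simp at h
  | cons a t =>
    simp only [List.tail_cons] at h ⊢
    cases t with
    | nil => exact absurd rfl h
    | cons b t' =>
      rw [List.getLastI_eq_getLast?, List.getLastI_eq_getLast?, List.getLast?_cons_cons]

private lemma rel_headI {l : List (Pos r)} (h : IsPath π l) {z : Pos r} (hz : z ∈ l) :
    z = l.headI ∨ URel l.headI z := by
  cases l with
  | nil => simp at hz
  | cons a t =>
    rcases List.mem_cons.mp hz with rfl | hz
    · exact Or.inl rfl
    · exact Or.inr ((List.pairwise_cons.mp h.pairwise).1 z hz)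

private lemma rel_getLastI {l : List (Pos r)} (h : IsPath π l) {z : Pos r} (hz : z ∈ l) :
    z = l.getLastI ∨ URel z l.getLastI := by
  have hne := h.1
  have hsplit := List.dropLast_append_getLast hne
  have hlast : l.getLast hne = l.getLastI := by
    simp [List.getLastI_eq_getLast?, List.getLast?_eq_getLast hne]
  have hp := h.pairwise
  rw [← hsplit] at hp hz
  rcases List.mem_append.mp hz with hz | hz
  · right
    have := (List.pairwise_append.mp hp).2.2 z hz (l.getLast hne) (List.mem_singleton_self _)
    rwa [hlast] at this
  · left; rw [List.mem_singleton.mp hz, hlast]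

/-- positions in a path lie weakly above-left of the head -/
private lemma le_headI {l : List (Pos r)} (h : IsPath π l) {z : Pos r} (hz : z ∈ l) :
    z.1 ≤ l.headI.1 ∧ z.2 ≤ l.headI.2 := by
  rcases rel_headI h hz with rfl | hr
  · exact ⟨le_refl _, le_refl _⟩
  · exact ⟨hr.1, hr.2.1⟩

/-- positions in a path lie weakly below-right of the last entry -/
private lemma ge_getLastI {l : List (Pos r)} (h : IsPath π l) {z : Pos r} (hz : z ∈ l) :
    l.getLastI.1 ≤ z.1 ∧ l.getLastI.2 ≤ z.2 := by
  rcases rel_getLastI h hz with rfl | hr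
  · exact ⟨le_refl _, le_refl _⟩
  · exact ⟨hr.1, hr.2.1⟩

/-! ### Conn helpers -/

variable {A B : Finset (Pos r)} {S : Finset (List (Pos r))}

private lemma Conn.path (hS : Conn π A B S) {l} (hl : l ∈ S) : IsPath π l := hS.1 l hl

private lemma Conn.ne_nil (hS : Conn π A B S) {l} (hl : l ∈ S) : l ≠ [] := (hS.1 l hl).1

private lemma Conn.headI_mem (hS : Conn π A B S) {l} (hl : l ∈ S) : l.headI ∈ A :=
  (hS.2.2.1 l.headI).mpr ⟨l, hl, head?_eq (hS.ne_nil hl)⟩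

private lemma Conn.getLastI_mem (hS : Conn π A B S) {l} (hl : l ∈ S) : l.getLastI ∈ B :=
  (hS.2.2.2 l.getLastI).mpr ⟨l, hl, getLast?_eq (hS.ne_nil hl)⟩

private lemma Conn.eq_of_mem (hS : Conn π A B S) {l l'} (hl : l ∈ S) (hl' : l' ∈ S)
    {z : Pos r} (hz : z ∈ l) (hz' : z ∈ l') : l = l' := by
  by_contra hne
  exact hS.2.1 l hl l' hl' hne z hz hz'

private lemma Conn.eq_of_headI (hS : Conn π A B S) {l l'} (hl : l ∈ S) (hl' : l' ∈ S)
    (h : l.headI = l'.headI) : l = l' :=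
  hS.eq_of_mem hl hl' (headI_mem_self (hS.ne_nil hl)) (h ▸ headI_mem_self (hS.ne_nil hl'))

private lemma Conn.exists_headI (hS : Conn π A B S) {a : Pos r} (ha : a ∈ A) :
    ∃ l ∈ S, l.headI = a := by
  obtain ⟨l, hl, hh⟩ := (hS.2.2.1 a).mp ha
  exact ⟨l, hl, by rw [head?_eq (hS.ne_nil hl)] at hh; exact Option.some.inj hh⟩

private lemma Conn.exists_getLastI (hS : Conn π A B S) {b : Pos r} (hb : b ∈ B) :
    ∃ l ∈ S, l.getLastI = b := by
  obtain ⟨l, hl, hh⟩ := (hS.2.2.2 b).mp hb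
  exact ⟨l, hl, by rw [getLast?_eq (hS.ne_nil hl)] at hh; exact Option.some.inj hh⟩

private lemma Conn.image_headI (hS : Conn π A B S) [DecidableEq (Pos r)] :
    S.image List.headI = A := by
  ext a
  simp only [Finset.mem_image]
  constructor
  · rintro ⟨l, hl, rfl⟩; exact hS.headI_mem hl
  · intro ha; obtain ⟨l, hl, hh⟩ := hS.exists_headI ha; exact ⟨l, hl, hh⟩

private lemma Conn.image_getLastI (hS : Conn π A B S) [DecidableEq (Pos r)] :
    S.image List.getLastI = B := by
  ext b
  simp only [Finset.mem_image]
  constructor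
  · rintro ⟨l, hl, rfl⟩; exact hS.getLastI_mem hl
  · intro hb; obtain ⟨l, hl, hh⟩ := hS.exists_getLastI hb; exact ⟨l, hl, hh⟩

private lemma Conn.headI_injOn (hS : Conn π A B S) :
    Set.InjOn List.headI (S : Set (List (Pos r))) := fun l hl l' hl' h => hS.eq_of_headI hl hl' h

private lemma Conn.getLastI_injOn (hS : Conn π A B S) :
    Set.InjOn List.getLastI (S : Set (List (Pos r))) := fun l hl l' hl' h =>
  hS.eq_of_mem hl hl' (getLastI_mem_self (hS.ne_nil hl)) (h ▸ getLastI_mem_self (hS.ne_nil hl'))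

private lemma Conn.card_eq_A (hS : Conn π A B S) : S.card = A.card := by
  classical
  rw [← hS.image_headI, Finset.card_image_of_injOn hS.headI_injOn]

private lemma Conn.card_eq_B (hS : Conn π A B S) : S.card = B.card := by
  classical
  rw [← hS.image_getLastI, Finset.card_image_of_injOn hS.getLastI_injOn]

/-! ### matrix structure -/

private lemma le_lastIdx (c : Fin r) : c ≤ lastIdx r := by
  rw [Fin.le_def]
  have := c.isLt
  show (c : ℕ) ≤ r - 1
  omega

private lemma nonzero_lastCol {a : Fin r} :
    IsNonzero π (a, lastIdx r) ↔ π.symm (lastIdx r) ≤ a := by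
  constructor
  · rintro (h | ⟨-, h2⟩)
    · exact le_of_eq (by simp only [show lastIdx r = π a from h, Equiv.symm_apply_apply])
    · exact le_of_lt h2
  · intro h
    rcases eq_or_lt_of_le h with h | h
    · left
      show lastIdx r = π a
      rw [← h, Equiv.apply_symm_apply]
    · right
      refine ⟨?_, h⟩
      show π a < lastIdx r
      rcases eq_or_lt_of_le (le_lastIdx (π a)) with he | hl
      · exfalso
        have : π.symm (lastIdx r) = a := by rw [← he, Equiv.symm_apply_apply]
        rw [this] at h
        exact lt_irrefl _ h
      · exact hl

private lemma gammaCol_nonzero (a : Fin r) : IsNonzero π (a, gammaCol π a) := by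
  have := Finset.max'_mem (Finset.univ.filter fun c => IsNonzero π (a, c))
    ⟨π a, Finset.mem_filter.2 ⟨Finset.mem_univ _, Or.inl rfl⟩⟩
  exact (Finset.mem_filter.mp this).2

private lemma le_gammaCol {a c : Fin r} (h : IsNonzero π (a, c)) : c ≤ gammaCol π a := by
  unfold gammaCol
  refine Finset.le_max' _ c ?_
  exact Finset.mem_filter.mpr ⟨Finset.mem_univ _, h⟩

private lemma gammaCol_eq_lastIdx {a : Fin r} (h : IsNonzero π (a, lastIdx r)) :
    gammaCol π a = lastIdx r :=
  le_antisymm (le_lastIdx _) (le_gammaCol h)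

variable {d j : Fin r}

private lemma mem_destRows {a : Fin r} :
    a ∈ destRows π d j ↔ π.symm j ≤ a ∧ a ≤ d ∧ j ≤ π a := by
  simp [destRows]

private lemma mem_Dest {y : Pos r} :
    y ∈ Dest π d j ↔ y.1 ∈ destRows π d j ∧ y.2 = π y.1 := by
  simp only [Dest, Finset.mem_image]
  constructor
  · rintro ⟨a, ha, rfl⟩; exact ⟨ha, rfl⟩
  · rintro ⟨h1, h2⟩
    exact ⟨y.1, h1, Prod.ext rfl h2.symm⟩

private lemma mem_Orig {o : Pos r} :
    o ∈ Orig π d j ↔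
      o = gammaPos π o.1 ∧ (o.1 = d ∨ o.1 ∈ (destRows π d j).erase (π.symm j)) := by
  simp only [Orig, Finset.mem_insert, Finset.mem_image]
  constructor
  · rintro (rfl | ⟨a, ha, rfl⟩)
    · exact ⟨rfl, Or.inl rfl⟩
    · exact ⟨rfl, Or.inr ha⟩
  · rintro ⟨ho, h | h⟩
    · left; rw [ho, h]
    · right; exact ⟨o.1, h, ho.symm⟩

private lemma orig_eq_of_fst {o o' : Pos r} (h : o ∈ Orig π d j) (h' : o' ∈ Orig π d j)
    (hf : o.1 = o'.1) : o = o' := by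
  rw [(mem_Orig.mp h).1, (mem_Orig.mp h').1, hf]

private lemma mem_Orig_of_lastCol {c : Fin r} (hc : c ∈ (destRows π d j).erase (π.symm j))
    (h : IsNonzero π (c, lastIdx r)) : ((c, lastIdx r) : Pos r) ∈ Orig π d j :=
  mem_Orig.mpr ⟨Prod.ext rfl (gammaCol_eq_lastIdx h).symm, Or.inr hc⟩

private lemma d_not_mem_destRows (hfree : IsFree π (d, j)) : d ∉ destRows π d j := by
  intro h
  exact absurd hfree.1 (not_lt.mpr (mem_destRows.mp h).2.2)

private lemma orig_row_le {o : Pos r} (ho : o ∈ Orig π d j) : o.1 ≤ d := by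
  rcases (mem_Orig.mp ho).2 with h | h
  · exact le_of_eq h
  · exact (mem_destRows.mp (Finset.mem_of_mem_erase h)).2.1

/-- the bundle of facts derived from `x ∈ O1` -/
private lemma O1_facts (hfree : IsFree π (d, j)) {x : Pos r} (hx : x ∈ O1 π d j) :
    x.2 = lastIdx r ∧ x ∈ Orig π d j ∧ x.1 < d ∧
    ((x.1 - 1 : Fin r) : ℕ) + 1 = (x.1 : ℕ) ∧
    IsFree π ((x.1 - 1 : Fin r), x.2) ∧
    (((x.1 - 1 : Fin r), x.2) : Pos r) ∉ Orig π d j ∧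
    IsFree π x ∧
    x.1 ∈ (destRows π d j).erase (π.symm j) ∧
    gammaPos π d = ((d, lastIdx r) : Pos r) := by
  obtain ⟨hxO, hcol, hlt, t, ht1, ht2, ht3⟩ := Finset.mem_filter.mp hx
  have hcol' : x.2 = lastIdx r := Fin.ext (by rw [hcol]; rfl)
  have hr2 : 2 ≤ r := by
    have h1 := x.1.isLt
    omega
  have hx1 : x.1 = t + 1 := by
    apply Fin.ext
    rw [Fin.val_add, ← ht1]
    have : ((1 : Fin r) : ℕ) = 1 := by
      rw [Fin.val_one']
      exact Nat.mod_eq_of_lt hr2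
    rw [this]
    exact (Nat.mod_eq_of_lt (ht1 ▸ x.1.isLt)).symm
  have hsub : (x.1 - 1 : Fin r) = t := by rw [hx1]; exact add_sub_cancel_right t 1
  have ht1' : ((x.1 - 1 : Fin r) : ℕ) + 1 = (x.1 : ℕ) := by rw [hsub]; exact ht1
  have htfree : IsFree π ((x.1 - 1 : Fin r), x.2) := by rw [hsub]; exact ht2
  have htnot : (((x.1 - 1 : Fin r), x.2) : Pos r) ∉ Orig π d j := by rw [hsub]; exact ht3
  have hts : π.symm x.2 < t := ht2.2
  have htx : (t : ℕ) < x.1 := by omega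
  have hxfree : IsFree π x := by
    constructor
    · show π x.1 < x.2
      rw [hcol']
      rcases eq_or_lt_of_le (le_lastIdx (π x.1)) with he | hl
      · exfalso
        have : π.symm (lastIdx r) = x.1 := by rw [← he, Equiv.symm_apply_apply]
        rw [hcol'] at hts
        rw [this] at hts
        have h1 : (x.1 : ℕ) < t := hts
        omega
      · exact hl
      
    · show π.symm x.2 < x.1
      exact lt_trans hts (by exact_mod_cast htx)
  have hrow : x.1 ∈ (destRows π d j).erase (π.symm j) := by
    rcases (mem_Orig.mp hxO).2 with h | h
    · exact absurd h (by intro h; rw [h] at hlt; exact lt_irrefl _ hlt)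
    · exact h
  have hgd : gammaPos π d = ((d, lastIdx r) : Pos r) := by
    have hnz : IsNonzero π (d, lastIdx r) := by
      rw [nonzero_lastCol]
      rw [hcol'] at hts
      have h1 : (π.symm (lastIdx r) : ℕ) < t := hts
      have h2 : (x.1 : ℕ) < d := hlt
      rw [Fin.le_def]
      omega
    exact Prod.ext rfl (gammaCol_eq_lastIdx hnz)
  exact ⟨hcol', hxO, hlt, ht1', htfree, htnot, hxfree, hrow, hgd⟩

/-! ### finiteness -/

private lemma conn_finite (π : Equiv.Perm (Fin r)) (A B : Finset (Pos r)) :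
    {S : Finset (List (Pos r)) | Conn π A B S}.Finite := by
  classical
  have hN : {l : List (Pos r) | l.Nodup}.Finite :=
    (List.finite_length_le (Pos r) (Fintype.card (Pos r))).subset
      (fun l hl => hl.length_le_card)
  have hsub : {S : Finset (List (Pos r)) | Conn π A B S} ⊆
      (fun S : Finset (List (Pos r)) => (S : Set (List (Pos r)))) ⁻¹'
        {t | t ⊆ {l | l.Nodup}} := by
    intro S hS l hl
    exact (hS.1 l (by exact_mod_cast hl)).nodup
  exact (Set.Finite.preimage (Finset.coe_injective.injOn)
    hN.finite_subsets).subset hsub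

/-! ### the pigeonhole splitting -/

private lemma conn_split {A B : Finset (Pos r)} {S : Finset (List (Pos r))}
    (hS : Conn π A B S) (k : ℕ)
    (hcard : (A.filter fun o => k < (o.1 : ℕ)).card = (B.filter fun b => k ≤ (b.1 : ℕ)).card)
    (hstep : ∀ l ∈ S, ((l.headI.1 : ℕ) ≤ k) → ((l.getLastI.1 : ℕ) < k)) :
    ((S.filter fun l => k < (l.headI.1 : ℕ)).image List.getLastI
        = B.filter fun b => k ≤ (b.1 : ℕ)) ∧
    ((S.filter fun l => ¬ k < (l.headI.1 : ℕ)).image List.getLastI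
        = B.filter fun b => (b.1 : ℕ) < k) := by
  classical
  have himgA : ∀ p : Pos r → Prop, ∀ hp : DecidablePred p,
      (S.filter fun l => p l.headI).image List.headI = A.filter p := by
    intro p hp
    rw [← hS.image_headI, Finset.filter_image]
  have hcard1 : (S.filter fun l => k < (l.headI.1 : ℕ)).card
      = (A.filter fun o => k < (o.1 : ℕ)).card := by
    rw [← himgA (fun o => k < (o.1 : ℕ)) _]
    exact (Finset.card_image_of_injOn (hS.headI_injOn.mono (by
      intro l hl
      exact Finset.mem_of_mem_filter _ (by exact_mod_cast hl)))).symm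
  have hcard2 : (S.filter fun l => ¬ k < (l.headI.1 : ℕ)).card
      = (A.filter fun o => ¬ k < (o.1 : ℕ)).card := by
    rw [← himgA (fun o => ¬ k < (o.1 : ℕ)) _]
    exact (Finset.card_image_of_injOn (hS.headI_injOn.mono (by
      intro l hl
      exact Finset.mem_of_mem_filter _ (by exact_mod_cast hl)))).symm
  have hAB : A.card = B.card := by rw [← hS.card_eq_A, hS.card_eq_B]
  have hsplitA := Finset.card_filter_add_card_filter_not
    (s := A) (p := fun o => k < (o.1 : ℕ))
  have hsplitB := Finset.card_filter_add_card_filter_not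
    (s := B) (p := fun b => k ≤ (b.1 : ℕ))
  have hBneg : (B.filter fun b => ¬ k ≤ (b.1 : ℕ)) = B.filter fun b => (b.1 : ℕ) < k := by
    apply Finset.filter_congr
    intro b _
    exact Nat.not_le
  -- the low part
  have hlowsub : (S.filter fun l => ¬ k < (l.headI.1 : ℕ)).image List.getLastI
      ⊆ B.filter fun b => (b.1 : ℕ) < k := by
    intro b hb
    obtain ⟨l, hl, rfl⟩ := Finset.mem_image.mp hb
    obtain ⟨hlS, hlp⟩ := Finset.mem_filter.mp hl
    exact Finset.mem_filter.mpr ⟨hS.getLastI_mem hlS, hstep l hlS (by omega)⟩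
  have hcardlow : (B.filter fun b => (b.1 : ℕ) < k).card
      ≤ ((S.filter fun l => ¬ k < (l.headI.1 : ℕ)).image List.getLastI).card := by
    rw [Finset.card_image_of_injOn (hS.getLastI_injOn.mono (by
      intro l hl
      exact Finset.mem_of_mem_filter _ (by exact_mod_cast hl)))]
    rw [hcard2, ← hBneg] at *
    omega
  have hlow := Finset.eq_of_subset_of_card_le hlowsub hcardlow
  refine ⟨?_, hlow⟩
  -- the high part
  have hhighsub : (S.filter fun l => k < (l.headI.1 : ℕ)).image List.getLastI
      ⊆ B.filter fun b => k ≤ (b.1 : ℕ) := by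
    intro b hb
    obtain ⟨l, hl, rfl⟩ := Finset.mem_image.mp hb
    obtain ⟨hlS, hlp⟩ := Finset.mem_filter.mp hl
    refine Finset.mem_filter.mpr ⟨hS.getLastI_mem hlS, ?_⟩
    by_contra hcon
    have hmem : l.getLastI ∈ B.filter fun b => (b.1 : ℕ) < k :=
      Finset.mem_filter.mpr ⟨hS.getLastI_mem hlS, by omega⟩
    rw [← hlow] at hmem
    obtain ⟨l', hl', hll'⟩ := Finset.mem_image.mp hmem
    obtain ⟨hl'S, hl'p⟩ := Finset.mem_filter.mp hl'
    have : l' = l := hS.eq_of_mem hl'S hlS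
      (hll' ▸ getLastI_mem_self (hS.ne_nil hl'S)) (getLastI_mem_self (hS.ne_nil hlS))
    rw [this] at hl'p
    exact hl'p hlp
  have hcardhigh : (B.filter fun b => k ≤ (b.1 : ℕ)).card
      ≤ ((S.filter fun l => k < (l.headI.1 : ℕ)).image List.getLastI).card := by
    rw [Finset.card_image_of_injOn (hS.getLastI_injOn.mono (by
      intro l hl
      exact Finset.mem_of_mem_filter _ (by exact_mod_cast hl)))]
    rw [hcard1, hcard]
  exact Finset.eq_of_subset_of_card_le hhighsub hcardhigh

/-! ### the distinguished origin of a path system -/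

private def Fib (x : Pos r) (S : Finset (List (Pos r))) : Prop :=
  (∃ l ∈ S, l.head? = some x ∧ StartsUp r l) ∧
  ∀ l ∈ S, ∀ h ∈ l.head?, (x.1 : ℕ) < (h.1 : ℕ) → StartsLeft r l

private def LC (π : Equiv.Perm (Fin r)) (d j : Fin r) (S : Finset (List (Pos r))) : Prop :=
  Conn π (Orig π d j) (Dest π d j) S ∧ (∃ l ∈ S, StartsUp r l) ∧
    ∀ l ∈ S, l.head? = some (gammaPos π d) → ∀ y ∈ l.tail.head?, y.1 = (gammaPos π d).1

open scoped Classical in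
private noncomputable def upSet (x : Pos r) (S : Finset (List (Pos r))) :
    Finset (List (Pos r)) :=
  S.filter (fun l => ∀ h ∈ l.head?, (h.1 : ℕ) < (x.1 : ℕ)) ∪
    (S.filter (fun l => l.head? = some x)).image List.tail

open scoped Classical in
private noncomputable def downSet (x : Pos r) (S : Finset (List (Pos r))) :
    Finset (List (Pos r)) :=
  S.filter (fun l => ∀ h ∈ l.head?, (x.1 : ℕ) < (h.1 : ℕ))

open scoped Classical in
private noncomputable def glueSet (x x' : Pos r) (S₁ S₂ : Finset (List (Pos r))) :
    Finset (List (Pos r)) :=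
  (S₁.filter (fun l => l.head? ≠ some x')) ∪
    (S₁.filter (fun l => l.head? = some x')).image (List.cons x) ∪ S₂

private lemma step_head_tail {l : List (Pos r)} (hp : IsPath π l) {y : Pos r}
    (hy : l.tail.head? = some y) : Step π l.headI y := by
  cases l with
  | nil => simp at hy
  | cons a t =>
    cases t with
    | nil => simp at hy
    | cons b t' =>
      have hb : b = y := by simpa using hy
      subst hb
      exact (List.isChain_cons_cons.mp hp.2.2).1

private lemma not_left_and_up {l : List (Pos r)} (hp : IsPath π l) (hL : StartsLeft r l)
    (hU : StartsUp r l) : False := by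
  obtain ⟨x₀, hx₀, hcol, y, hy, hyc⟩ := hU
  have hrow := hL x₀ hx₀ hcol y hy
  have hx₀' : x₀ = l.headI := by rw [head?_eq hp.1] at hx₀; exact (Option.some.inj hx₀).symm
  have hstep := step_head_tail hp hy
  rw [← hx₀'] at hstep
  rcases hstep with ⟨-, h2, -⟩ | ⟨-, h2, -⟩
  · rw [hyc] at h2; exact lt_irrefl _ h2
  · rw [hrow] at h2; exact lt_irrefl _ h2

/-- a path satisfying `StartsLeft` meets the last column only at its head -/
private lemma lastCol_mem_eq_headI {l : List (Pos r)} (hp : IsPath π l)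
    (hL : StartsLeft r l) {z : Pos r} (hz : z ∈ l) (hcol : z.2 = lastIdx r) :
    z = l.headI := by
  rcases rel_headI hp hz with h | h
  · exact h
  exfalso
  have hzne : z ≠ l.headI := by
    intro he; rw [he] at h; exact lt_irrefl _ h.2.2
  have hhcol : l.headI.2 = lastIdx r := le_antisymm (le_lastIdx _) (hcol ▸ h.2.1)
  have hztail : z ∈ l.tail := by
    cases l with
    | nil => simp at hz
    | cons a t =>
      rcases List.mem_cons.mp hz with rfl | hz'
      · exact absurd rfl hzne
      · exact hz'
  have htne : l.tail ≠ [] := List.ne_nil_of_mem hztail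
  have hy : l.tail.head? = some l.tail.headI := head?_eq htne
  have hrow := hL l.headI (head?_eq hp.1) (by rw [hhcol]; rfl) l.tail.headI hy
  have hstep := step_head_tail hp hy
  rcases hstep with ⟨-, h2, -⟩ | ⟨-, h2, -⟩
  · -- left step: column of second entry < lastIdx, and all of tail even more
    have hptail : IsPath π l.tail := hp.tail htne
    have hzcol : z.2 ≤ l.tail.headI.2 := (le_headI hptail hztail).2
    have : (z.2 : ℕ) < l.headI.2 := lt_of_le_of_lt hzcol h2
    rw [hcol, hhcol] at this
    exact lt_irrefl _ this
  · rw [hrow] at h2; exact lt_irrefl _ h2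

private lemma nonzero_of_fst {x : Pos r} (h : IsNonzero π x) : IsNonzero π (x.1, x.2) := h

private lemma LC_exists_unique (hfree : IsFree π (d, j)) {S : Finset (List (Pos r))}
    (hS : LC π d j S) : ∃! x : Pos r, x ∈ O1 π d j ∧ Fib x S := by
  classical
  obtain ⟨hconn, hex, hbot⟩ := hS
  set cand := S.filter (fun l => StartsUp r l) with hcand
  have hcne : cand.Nonempty := by
    obtain ⟨l, hl, hU⟩ := hex
    exact ⟨l, Finset.mem_filter.mpr ⟨hl, hU⟩⟩
  set M := cand.image (fun l => (l.headI.1 : ℕ)) with hM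
  have hMne : M.Nonempty := hcne.image _
  obtain ⟨l₀, hl₀c, hl₀r⟩ := Finset.mem_image.mp (M.max'_mem hMne)
  obtain ⟨hl₀S, hU⟩ := Finset.mem_filter.mp hl₀c
  set x := l₀.headI with hxdef
  have hmax : ∀ l ∈ S, StartsUp r l → (l.headI.1 : ℕ) ≤ (x.1 : ℕ) := by
    intro l hl hUl
    rw [hl₀r]
    exact M.le_max' _ (Finset.mem_image_of_mem _ (Finset.mem_filter.mpr ⟨hl, hUl⟩))
  have hp₀ := hconn.path hl₀S
  obtain ⟨x₀, hx₀, hcoln, y, hy, hyc⟩ := hU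
  have hx₀' : x₀ = x := by rw [head?_eq hp₀.1] at hx₀; exact (Option.some.inj hx₀).symm
  rw [hx₀'] at hx₀ hcoln hyc
  have hcolF : x.2 = lastIdx r := Fin.ext (by rw [hcoln]; rfl)
  have hstep := step_head_tail hp₀ hy
  have hup : x.2 = y.2 ∧ (y.1 : ℕ) < (x.1 : ℕ) ∧
      ∀ a : Fin r, y.1 < a → a < x.1 → ¬IsNonzero π (a, x.2) := by
    rcases hstep with ⟨-, h2, -⟩ | ⟨h1, h2, -, h4⟩
    · rw [hyc] at h2; exact absurd h2 (lt_irrefl _)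
    · exact ⟨h1, h2, h4⟩
  have hxO : x ∈ Orig π d j := hconn.headI_mem hl₀S
  have hgdO : gammaPos π d ∈ Orig π d j := Finset.mem_insert_self _ _
  have hx_lt_d : (x.1 : ℕ) < (d : ℕ) := by
    rcases lt_or_eq_of_le (orig_row_le hxO) with h | h
    · exact h
    · exfalso
      have hxgd : x = gammaPos π d := orig_eq_of_fst hxO hgdO (by rw [h]; rfl)
      have hrow := hbot l₀ hl₀S (by rw [head?_eq hp₀.1, ← hxdef, hxgd]) y hy
      rw [← hxgd] at hrow
      rw [hrow] at hup
      exact lt_irrefl _ hup.2.1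
  have hnzx : IsNonzero π x := hp₀.2.1 x (headI_mem_self hp₀.1)
  have hnzy : IsNonzero π y := by
    rcases hstep with ⟨-, -, h3, -⟩ | ⟨-, -, h3, -⟩ <;> exact h3
  have hxlast : IsNonzero π (x.1, lastIdx r) := by rw [← hcolF]; exact hnzx
  have hylast : IsNonzero π (y.1, lastIdx r) := by
    rw [← hcolF, hup.1]
    exact nonzero_of_fst hnzy
  have hsymmx : π.symm (lastIdx r) ≤ x.1 := nonzero_lastCol.mp hxlast
  have hsymmy : π.symm (lastIdx r) ≤ y.1 := nonzero_lastCol.mp hylast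
  have hy_row : (y.1 : ℕ) + 1 = (x.1 : ℕ) := by
    by_contra hcon
    have hlt : (y.1 : ℕ) + 1 < (x.1 : ℕ) := by
      have := hup.2.1
      omega
    set a : Fin r := ⟨(y.1 : ℕ) + 1, lt_trans hlt x.1.isLt⟩ with ha
    have h1 : y.1 < a := by rw [Fin.lt_def]; show (y.1 : ℕ) < (y.1 : ℕ) + 1; omega
    have h2 : a < x.1 := by rw [Fin.lt_def]; exact hlt
    refine hup.2.2 a h1 h2 ?_
    rw [hcolF]
    refine nonzero_lastCol.mpr ?_
    rw [Fin.le_def] at hsymmy ⊢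
    show (π.symm (lastIdx r) : ℕ) ≤ (y.1 : ℕ) + 1
    omega
  have hxrow : x.1 ∈ (destRows π d j).erase (π.symm j) := by
    rcases (mem_Orig.mp hxO).2 with h | h
    · exfalso; rw [h] at hx_lt_d; exact lt_irrefl _ hx_lt_d
    · exact h
  have hsymmjx : (π.symm j : ℕ) < (x.1 : ℕ) := by
    have h1 := (Finset.mem_erase.mp hxrow).1
    have h2 := (mem_destRows.mp (Finset.mem_of_mem_erase hxrow)).1
    rw [Fin.le_def] at h2
    rcases lt_or_eq_of_le h2 with h | h
    · exact h
    · exact absurd (Fin.ext h).symm h1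
  have hymem : y ∈ l₀ := List.mem_of_mem_tail (List.mem_of_mem_head? hy)
  have hynotOrig : y ∉ Orig π d j := by
    intro hyO
    obtain ⟨l', hl', hhl'⟩ := hconn.exists_headI hyO
    have hyl' : y ∈ l' := hhl' ▸ headI_mem_self (hconn.ne_nil hl')
    have heq : l' = l₀ := hconn.eq_of_mem hl' hl₀S hyl' hymem
    rw [heq] at hhl'
    rw [← hxdef] at hhl'
    rw [← hhl'] at hup
    exact lt_irrefl _ hup.2.1
  have hy_eq : ((y.1, lastIdx r) : Pos r) = y := Prod.ext rfl (hup.1 ▸ hcolF.symm)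
  have hyne : y.1 ≠ π.symm (lastIdx r) := by
    intro he
    apply hynotOrig
    rw [← hy_eq]
    refine mem_Orig_of_lastCol ?_ hylast
    refine Finset.mem_erase.mpr ⟨?_, mem_destRows.mpr ⟨?_, ?_, ?_⟩⟩
    · intro hej
      have h1 : π y.1 = lastIdx r := by rw [he, Equiv.apply_symm_apply]
      have h2 : π y.1 = j := by rw [hej, Equiv.apply_symm_apply]
      have h3 : j ≤ π x.1 := (mem_destRows.mp (Finset.mem_of_mem_erase hxrow)).2.2
      have h5 : π x.1 = lastIdx r := le_antisymm (le_lastIdx _) (by rw [← h2, h1] at h3; exact h3)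
      have h6 : x.1 = y.1 := by
        rw [he, ← h5, Equiv.symm_apply_apply]
      rw [h6] at hup
      exact lt_irrefl _ hup.2.1
    · rw [Fin.le_def]; omega
    · rw [Fin.le_def]; omega
    · rw [he, Equiv.apply_symm_apply]; exact le_lastIdx _
  have hyfree : IsFree π (y.1, x.2) := by
    rw [hcolF]
    refine ⟨?_, lt_of_le_of_ne hsymmy (Ne.symm hyne)⟩
    show π y.1 < lastIdx r
    rcases lt_or_eq_of_le (le_lastIdx (π y.1)) with h | h
    · exact h
    · exfalso
      apply hyne
      rw [← h, Equiv.symm_apply_apply]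
  have hO1 : x ∈ O1 π d j := by
    refine Finset.mem_filter.mpr ⟨hxO, hcoln, Fin.lt_def.mpr hx_lt_d, y.1, hy_row, hyfree, ?_⟩
    intro hcon
    apply hynotOrig
    have : ((y.1, x.2) : Pos r) = y := Prod.ext rfl hup.1
    rwa [this] at hcon
  have hUl₀ : StartsUp r l₀ := ⟨x, head?_eq hp₀.1, hcoln, y, hy, hyc⟩
  have hFib : Fib x S := by
    refine ⟨⟨l₀, hl₀S, head?_eq hp₀.1, hUl₀⟩, ?_⟩
    intro l hl h hh hgt
    intro z hz hzcol w hw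
    have hzh : z = l.headI := by
      rw [head?_eq (hconn.ne_nil hl)] at hz
      exact (Option.mem_some_iff.mp hz).symm
    have hstepl := step_head_tail (hconn.path hl) hw
    rcases hstepl with ⟨h1, -, -⟩ | ⟨h1, -, -⟩
    · rw [hzh]; exact h1.symm
    · exfalso
      have : StartsUp r l := ⟨z, hz, hzcol, w, hw, by rw [hzh]; exact h1.symm⟩
      have hle := hmax l hl this
      have hheq : h = l.headI := by
        rw [head?_eq (hconn.ne_nil hl)] at hh
        exact (Option.mem_some_iff.mp hh).symm
      rw [hheq] at hgt
      omega
  refine ⟨x, ⟨hO1, hFib⟩, ?_⟩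
  rintro x' ⟨hO1', hFib'⟩
  obtain ⟨l', hl', hh', hU'⟩ := hFib'.1
  rcases lt_trichotomy (x'.1 : ℕ) (x.1 : ℕ) with h | h | h
  · exfalso
    have hsl := hFib'.2 l₀ hl₀S x (head?_eq hp₀.1) h
    exact not_left_and_up hp₀ hsl hUl₀
  · exact orig_eq_of_fst (Finset.mem_filter.mp hO1').1 hxO (Fin.ext h)
  · exfalso
    have hsl := hFib.2 l' hl' x' hh' h
    exact not_left_and_up (hconn.path hl') hsl hU'

/-! ### the counting identity at the cut -/

private lemma card_cut (hfree : IsFree π (d, j)) {x : Pos r} (hx : x ∈ O1 π d j) :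
    ((Orig π d j).filter fun o => (x.1 : ℕ) < (o.1 : ℕ)).card
      = ((Dest π d j).filter fun b => (x.1 : ℕ) ≤ (b.1 : ℕ)).card := by
  classical
  obtain ⟨hcolF, hxO, hxltd, ht1, htfree, htnot, hxfree, hxrow, hgd⟩ := O1_facts hfree hx
  have hxdr : x.1 ∈ destRows π d j := Finset.mem_of_mem_erase hxrow
  have hdnd : d ∉ destRows π d j := d_not_mem_destRows hfree
  have hgdO : gammaPos π d ∈ Orig π d j := Finset.mem_insert_self _ _
  have hsymmjx : (π.symm j : ℕ) ≤ (x.1 : ℕ) := (mem_destRows.mp hxdr).1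
  refine Finset.card_bij'
    (fun o _ => if (o.1 : ℕ) = (d : ℕ) then ((x.1, π x.1) : Pos r) else (o.1, π o.1))
    (fun b _ => if (b.1 : ℕ) = (x.1 : ℕ) then gammaPos π d else gammaPos π b.1)
    ?_ ?_ ?_ ?_
  · intro o ho
    obtain ⟨hoO, holt⟩ := Finset.mem_filter.mp ho
    by_cases hcase : (o.1 : ℕ) = (d : ℕ)
    · rw [if_pos hcase]
      exact Finset.mem_filter.mpr ⟨mem_Dest.mpr ⟨hxdr, rfl⟩, le_refl _⟩
    · rw [if_neg hcase]
      have hodr : o.1 ∈ (destRows π d j).erase (π.symm j) := by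
        rcases (mem_Orig.mp hoO).2 with h | h
        · exact absurd (congrArg Fin.val h) hcase
        · exact h
      refine Finset.mem_filter.mpr ⟨mem_Dest.mpr ⟨Finset.mem_of_mem_erase hodr, rfl⟩, ?_⟩
      exact le_of_lt holt
  · intro b hb
    obtain ⟨hbD, hble⟩ := Finset.mem_filter.mp hb
    obtain ⟨hbdr, hbeq⟩ := mem_Dest.mp hbD
    by_cases hcase : (b.1 : ℕ) = (x.1 : ℕ)
    · rw [if_pos hcase]
      refine Finset.mem_filter.mpr ⟨hgdO, ?_⟩
      rw [hgd]
      exact hxltd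
    · rw [if_neg hcase]
      have hblt : (x.1 : ℕ) < (b.1 : ℕ) := lt_of_le_of_ne hble (Ne.symm hcase)
      have hbne : b.1 ≠ π.symm j := by
        intro he
        rw [he] at hblt
        omega
      refine Finset.mem_filter.mpr ⟨mem_Orig.mpr ⟨rfl, Or.inr
        (Finset.mem_erase.mpr ⟨hbne, hbdr⟩)⟩, hblt⟩
  · intro o ho
    obtain ⟨hoO, holt⟩ := Finset.mem_filter.mp ho
    by_cases hcase : (o.1 : ℕ) = (d : ℕ)
    · rw [if_pos hcase]
      have ho' : o = gammaPos π d := orig_eq_of_fst hoO hgdO (Fin.ext hcase)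
      rw [ho']
      simp
    · rw [if_neg hcase]
      have hne : ((o.1, π o.1) : Pos r).1 ≠ x.1 := by
        intro he
        have : (o.1 : ℕ) = (x.1 : ℕ) := congrArg Fin.val he
        omega
      rw [if_neg (fun hc => hne (Fin.ext hc))]
      exact ((mem_Orig.mp hoO).1).symm
  · intro b hb
    obtain ⟨hbD, hble⟩ := Finset.mem_filter.mp hb
    obtain ⟨hbdr, hbeq⟩ := mem_Dest.mp hbD
    by_cases hcase : (b.1 : ℕ) = (x.1 : ℕ)
    · rw [if_pos hcase]
      rw [hgd]
      dsimp only
      rw [if_pos rfl]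
      have hb1 : b.1 = x.1 := Fin.ext hcase
      exact Prod.ext hb1.symm (by rw [hbeq, hb1])
    · rw [if_neg hcase]
      have hbnd : ((gammaPos π b.1).1 : ℕ) ≠ (d : ℕ) := by
        intro he
        exact hdnd ((Fin.ext he : b.1 = d) ▸ hbdr)
      rw [if_neg hbnd]
      exact Prod.ext rfl hbeq.symm

/-! ### the forward (splitting) direction -/

private lemma fwd (hfree : IsFree π (d, j)) {x : Pos r} (hx : x ∈ O1 π d j)
    {S : Finset (List (Pos r))} (hS : LC π d j S) (hfib : Fib x S) :
    Conn π (insert ((x.1 - 1, x.2) : Pos r)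
        ((Orig π d j).filter fun o => (o.1 : ℕ) < (x.1 : ℕ)))
      ((Dest π d j).filter fun y => (y.1 : ℕ) < (x.1 : ℕ)) (upSet x S) ∧
    Conn π ((Orig π d j).filter fun o => (x.1 : ℕ) < (o.1 : ℕ))
      ((Dest π d j).filter fun y => (x.1 : ℕ) ≤ (y.1 : ℕ)) (downSet x S) ∧
    (∀ l ∈ downSet x S, StartsLeft r l) ∧
    glueSet x ((x.1 - 1, x.2) : Pos r) (upSet x S) (downSet x S) = S ∧
    uSet π S = uSet π (upSet x S) * MvPolynomial.X x * uSet π (downSet x S) := by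
  classical
  obtain ⟨hconn, hexU, hbot⟩ := hS
  obtain ⟨⟨l₀, hl₀S, hhl₀, hUl₀⟩, hother⟩ := hfib
  obtain ⟨hcolF, hxO, hxltd, ht1, htfree, htnot, hxfree, hxrow, hgd⟩ := O1_facts hfree hx
  set x' : Pos r := ((x.1 - 1, x.2) : Pos r) with hx'def
  have hp₀ := hconn.path hl₀S
  have hl₀h : l₀.headI = x := by
    rw [head?_eq hp₀.1] at hhl₀
    exact Option.some.inj hhl₀
  -- second entry of l₀ is x'
  obtain ⟨x₀, hx₀, hcoln, y, hy, hyc⟩ := hUl₀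
  have hx₀' : x₀ = x := by rw [hhl₀] at hx₀; exact (Option.some.inj hx₀).symm
  rw [hx₀'] at hx₀ hcoln hyc
  have hstep := step_head_tail hp₀ hy
  rw [hl₀h] at hstep
  have hup : x.2 = y.2 ∧ (y.1 : ℕ) < (x.1 : ℕ) ∧
      ∀ a : Fin r, y.1 < a → a < x.1 → ¬IsNonzero π (a, x.2) := by
    rcases hstep with ⟨-, h2, -⟩ | ⟨h1, h2, -, h4⟩
    · rw [hyc] at h2; exact absurd h2 (lt_irrefl _)
    · exact ⟨h1, h2, h4⟩
  have hyx' : y = x' := by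
    have hrow : (y.1 : ℕ) = ((x.1 - 1 : Fin r) : ℕ) := by
      by_contra hcon
      have hlt : (y.1 : ℕ) < ((x.1 - 1 : Fin r) : ℕ) := by
        have := hup.2.1; omega
      refine hup.2.2 (x.1 - 1) (Fin.lt_def.mpr hlt) (Fin.lt_def.mpr (by omega)) ?_
      exact Or.inr htfree
    exact Prod.ext (Fin.ext hrow) hyc
  have htail_head : l₀.tail.head? = some x' := by rw [hy, hyx']
  have htne : l₀.tail ≠ [] := by
    intro he; rw [he] at htail_head; simp at htail_head
  have hptail : IsPath π l₀.tail := hp₀.tail htne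
  have htailh : l₀.tail.headI = x' := by
    rw [head?_eq htne] at htail_head
    exact Option.some.inj htail_head
  have htailnS : l₀.tail ∉ S := by
    intro hc
    have hne : l₀.tail ≠ l₀ := by
      intro he
      have := congrArg List.length he
      rw [List.length_tail] at this
      have := List.length_pos_iff.mpr hp₀.1
      omega
    exact hconn.2.1 l₀.tail hc l₀ hl₀S hne x' (htailh ▸ headI_mem_self htne)
      (htailh ▸ List.mem_of_mem_tail (headI_mem_self htne))
  have hfilx : S.filter (fun l => l.head? = some x) = {l₀} := by
    ext l
    simp only [Finset.mem_filter, Finset.mem_singleton]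
    constructor
    · rintro ⟨hl, hh⟩
      refine hconn.eq_of_headI hl hl₀S ?_
      rw [head?_eq (hconn.ne_nil hl)] at hh
      rw [Option.some.inj hh, hl₀h]
    · rintro rfl
      exact ⟨hl₀S, hhl₀⟩
  have hupalt : upSet x S = insert l₀.tail
      (S.filter (fun l => ∀ h ∈ l.head?, (h.1 : ℕ) < (x.1 : ℕ))) := by
    rw [upSet, hfilx, Finset.image_singleton, Finset.union_comm, ← Finset.insert_eq]
  -- heads of members
  have hheadQ : ∀ l ∈ S, ((∀ h ∈ l.head?, (h.1 : ℕ) < (x.1 : ℕ)) ↔ (l.headI.1 : ℕ) < (x.1 : ℕ)) := by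
    intro l hl
    rw [head?_eq (hconn.ne_nil hl)]
    constructor
    · intro h; exact h _ rfl
    · intro h z hz
      rw [← Option.mem_some_iff.mp hz]
      exact h
  have hheadP : ∀ l ∈ S, ((∀ h ∈ l.head?, (x.1 : ℕ) < (h.1 : ℕ)) ↔ (x.1 : ℕ) < (l.headI.1 : ℕ)) := by
    intro l hl
    rw [head?_eq (hconn.ne_nil hl)]
    constructor
    · intro h; exact h _ rfl
    · intro h z hz
      rw [← Option.mem_some_iff.mp hz]
      exact h
  have hdownalt : downSet x S = S.filter (fun l => (x.1 : ℕ) < (l.headI.1 : ℕ)) :=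
    Finset.filter_congr (fun l hl => hheadP l hl)
  -- a path whose head row is ≤ x.1 ends strictly above row x.1
  have hstepS : ∀ l ∈ S, ((l.headI.1 : ℕ) ≤ (x.1 : ℕ)) → ((l.getLastI.1 : ℕ) < (x.1 : ℕ)) := by
    intro l hl hle
    rcases lt_or_eq_of_le hle with h | h
    · have := (le_headI (hconn.path hl) (getLastI_mem_self (hconn.ne_nil hl))).1
      rw [Fin.le_def] at this
      omega
    · have hlx : l.headI = x := orig_eq_of_fst (hconn.headI_mem hl) hxO (Fin.ext h)
      have hll₀ : l = l₀ := hconn.eq_of_headI hl hl₀S (by rw [hlx, hl₀h])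
      subst hll₀
      have hlast : l.getLastI = l.tail.getLastI := (getLastI_tail htne).symm
      rw [hlast]
      have hmem := getLastI_mem_self htne
      have hthis := (le_headI hptail hmem).1
      rw [htailh, hx'def] at hthis
      rw [Fin.le_def] at hthis
      dsimp only at hthis
      omega
  have hsplit := conn_split hconn (x.1 : ℕ) (card_cut hfree hx) hstepS
  -- the two halves of S.filter (row ≤ x.1)
  have hlowsplit : S.filter (fun l => ¬ (x.1 : ℕ) < (l.headI.1 : ℕ))
      = insert l₀ (S.filter (fun l => (l.headI.1 : ℕ) < (x.1 : ℕ))) := by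
    ext l
    simp only [Finset.mem_filter, Finset.mem_insert, not_lt]
    constructor
    · rintro ⟨hl, hle⟩
      rcases lt_or_eq_of_le hle with h | h
      · exact Or.inr ⟨hl, h⟩
      · exact Or.inl (hconn.eq_of_headI hl hl₀S
          (by rw [orig_eq_of_fst (hconn.headI_mem hl) hxO (Fin.ext h), hl₀h]))
    · rintro (rfl | ⟨hl, hlt⟩)
      · exact ⟨hl₀S, by rw [hl₀h]⟩
      · exact ⟨hl, le_of_lt hlt⟩
  have hQeq : S.filter (fun l => ∀ h ∈ l.head?, (h.1 : ℕ) < (x.1 : ℕ))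
      = S.filter (fun l => (l.headI.1 : ℕ) < (x.1 : ℕ)) :=
    Finset.filter_congr (fun l hl => hheadQ l hl)
  have hl₀notQ : l₀ ∉ S.filter (fun l => (l.headI.1 : ℕ) < (x.1 : ℕ)) := by
    intro hc
    have := (Finset.mem_filter.mp hc).2
    rw [hl₀h] at this
    omega
  have htailnQ : l₀.tail ∉ S.filter (fun l => (l.headI.1 : ℕ) < (x.1 : ℕ)) :=
    fun hc => htailnS (Finset.mem_of_mem_filter _ hc)
  -- image of the upper part
  have hupimg : (upSet x S).image List.getLastI
      = (Dest π d j).filter (fun b => (b.1 : ℕ) < (x.1 : ℕ)) := by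
    rw [hupalt, hQeq, Finset.image_insert, getLastI_tail htne, ← Finset.image_insert,
      ← hlowsplit, hsplit.2]
  -- Conn for the upper part
  have hconnup : Conn π (insert x' ((Orig π d j).filter fun o => (o.1 : ℕ) < (x.1 : ℕ)))
      ((Dest π d j).filter fun y => (y.1 : ℕ) < (x.1 : ℕ)) (upSet x S) := by
    have hupmem : ∀ l ∈ upSet x S,
        IsPath π l ∧ (l = l₀.tail ∨ (l ∈ S ∧ (l.headI.1 : ℕ) < (x.1 : ℕ))) := by
      intro l hl
      rw [hupalt, hQeq, Finset.mem_insert] at hl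
      rcases hl with rfl | hl
      · exact ⟨hptail, Or.inl rfl⟩
      · obtain ⟨h1, h2⟩ := Finset.mem_filter.mp hl
        exact ⟨hconn.path h1, Or.inr ⟨h1, h2⟩⟩
    refine ⟨fun l hl => (hupmem l hl).1, ?_, ?_, ?_⟩
    · -- disjointness
      intro l hl l' hl' hne z hz hz'
      rcases (hupmem l hl).2 with rfl | hlS <;> rcases (hupmem l' hl').2 with rfl | hl'S
      · exact hne rfl
      · have hne' : l₀ ≠ l' := by
          rintro rfl
          have hcon := hl'S.2
          rw [hl₀h] at hcon
          omega
        exact hconn.2.1 l₀ hl₀S l' hl'S.1 hne' z (List.mem_of_mem_tail hz) hz'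
      · have hne' : l ≠ l₀ := by
          rintro rfl
          have hcon := hlS.2
          rw [hl₀h] at hcon
          omega
        exact hconn.2.1 l hlS.1 l₀ hl₀S hne' z hz (List.mem_of_mem_tail hz')
      · exact hconn.2.1 l hlS.1 l' hl'S.1 hne z hz hz'
    · -- heads
      intro a
      constructor
      · intro ha
        rcases Finset.mem_insert.mp ha with rfl | ha
        · exact ⟨l₀.tail, by rw [hupalt]; exact Finset.mem_insert_self _ _, htail_head⟩
        · obtain ⟨haO, halt⟩ := Finset.mem_filter.mp ha
          obtain ⟨l, hl, hlh⟩ := hconn.exists_headI haO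
          refine ⟨l, ?_, by rw [head?_eq (hconn.ne_nil hl), hlh]⟩
          rw [hupalt, hQeq]
          exact Finset.mem_insert_of_mem (Finset.mem_filter.mpr ⟨hl, by rw [hlh]; exact halt⟩)
      · rintro ⟨l, hl, hlh⟩
        rw [hupalt, hQeq] at hl
        rcases Finset.mem_insert.mp hl with rfl | hl
        · rw [htail_head] at hlh
          rw [Option.some.inj hlh]
          exact Finset.mem_insert_self _ _
        · obtain ⟨hlS, hlt⟩ := Finset.mem_filter.mp hl
          rw [head?_eq (hconn.ne_nil hlS)] at hlh
          rw [← Option.some.inj hlh]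
          exact Finset.mem_insert_of_mem
            (Finset.mem_filter.mpr ⟨hconn.headI_mem hlS, hlt⟩)
    · -- lasts
      intro b
      constructor
      · intro hb
        rw [← hupimg] at hb
        obtain ⟨l, hl, hlb⟩ := Finset.mem_image.mp hb
        have hlne : l ≠ [] := by
          rw [hupalt] at hl
          rcases Finset.mem_insert.mp hl with rfl | hl
          · exact htne
          · exact hconn.ne_nil (Finset.mem_of_mem_filter _ hl)
        exact ⟨l, hl, by rw [getLast?_eq hlne, hlb]⟩
      · rintro ⟨l, hl, hlb⟩
        have hlne : l ≠ [] := by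
          rw [hupalt] at hl
          rcases Finset.mem_insert.mp hl with rfl | hl
          · exact htne
          · exact hconn.ne_nil (Finset.mem_of_mem_filter _ hl)
        rw [getLast?_eq hlne] at hlb
        rw [← Option.some.inj hlb, ← hupimg]
        exact Finset.mem_image_of_mem _ hl
  -- Conn for the lower part
  have hconndown : Conn π ((Orig π d j).filter fun o => (x.1 : ℕ) < (o.1 : ℕ))
      ((Dest π d j).filter fun y => (x.1 : ℕ) ≤ (y.1 : ℕ)) (downSet x S) := by
    refine ⟨fun l hl => hconn.path (Finset.mem_of_mem_filter _ hl), ?_, ?_, ?_⟩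
    · intro l hl l' hl' hne z hz hz'
      exact hconn.2.1 l (Finset.mem_of_mem_filter _ hl) l' (Finset.mem_of_mem_filter _ hl')
        hne z hz hz'
    · intro a
      constructor
      · intro ha
        obtain ⟨haO, halt⟩ := Finset.mem_filter.mp ha
        obtain ⟨l, hl, hlh⟩ := hconn.exists_headI haO
        refine ⟨l, ?_, by rw [head?_eq (hconn.ne_nil hl), hlh]⟩
        rw [hdownalt]
        exact Finset.mem_filter.mpr ⟨hl, by rw [hlh]; exact halt⟩
      · rintro ⟨l, hl, hlh⟩
        rw [hdownalt] at hl
        obtain ⟨hlS, hlt⟩ := Finset.mem_filter.mp hl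
        rw [head?_eq (hconn.ne_nil hlS)] at hlh
        rw [← Option.some.inj hlh]
        exact Finset.mem_filter.mpr ⟨hconn.headI_mem hlS, hlt⟩
    · intro b
      constructor
      · intro hb
        rw [← hsplit.1] at hb
        obtain ⟨l, hl, hlb⟩ := Finset.mem_image.mp hb
        have hlS := Finset.mem_of_mem_filter _ hl
        refine ⟨l, by rw [hdownalt]; exact hl, ?_⟩
        rw [getLast?_eq (hconn.ne_nil hlS), hlb]
      · rintro ⟨l, hl, hlb⟩
        rw [hdownalt] at hl
        have hlS := Finset.mem_of_mem_filter _ hl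
        rw [getLast?_eq (hconn.ne_nil hlS)] at hlb
        rw [← Option.some.inj hlb, ← hsplit.1]
        exact Finset.mem_image_of_mem _ hl
  -- StartsLeft in the lower part
  have hdownSL : ∀ l ∈ downSet x S, StartsLeft r l := by
    intro l hl
    rw [hdownalt] at hl
    obtain ⟨hlS, hlt⟩ := Finset.mem_filter.mp hl
    exact hother l hlS l.headI (by rw [head?_eq (hconn.ne_nil hlS)]; rfl) hlt
  -- gluing back
  have hx'noS : ∀ l ∈ S, l.head? ≠ some x' := by
    intro l hl hc
    apply htnot
    have : l.headI = x' := by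
      rw [head?_eq (hconn.ne_nil hl)] at hc
      exact Option.some.inj hc
    exact this ▸ hconn.headI_mem hl
  have hglue : glueSet x x' (upSet x S) (downSet x S) = S := by
    have h1 : (upSet x S).filter (fun l => l.head? ≠ some x')
        = S.filter (fun l => (l.headI.1 : ℕ) < (x.1 : ℕ)) := by
      rw [hupalt, hQeq, Finset.filter_insert, if_neg (by rw [htail_head]; simp)]
      apply Finset.filter_true_of_mem
      intro l hl
      exact hx'noS l (Finset.mem_of_mem_filter _ hl)
    have h2 : (upSet x S).filter (fun l => l.head? = some x') = {l₀.tail} := by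
      rw [hupalt, hQeq, Finset.filter_insert, if_pos htail_head]
      rw [Finset.filter_false_of_mem, LawfulSingleton.insert_empty_eq]
      intro l hl
      exact hx'noS l (Finset.mem_of_mem_filter _ hl)
    rw [glueSet, h1, h2, Finset.image_singleton]
    have h3 : x :: l₀.tail = l₀ := by
      rw [← hl₀h]
      exact headI_cons_tail hp₀.1
    rw [h3]
    ext l
    simp only [Finset.mem_union, Finset.mem_filter, Finset.mem_singleton, hdownalt]
    constructor
    · rintro ((⟨hl, -⟩ | rfl) | ⟨hl, -⟩)
      · exact hl
      · exact hl₀S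
      · exact hl
    · intro hl
      rcases lt_trichotomy ((l.headI.1 : ℕ)) ((x.1 : ℕ)) with h | h | h
      · exact Or.inl (Or.inl ⟨hl, h⟩)
      · exact Or.inl (Or.inr (hconn.eq_of_headI hl hl₀S
          (by rw [orig_eq_of_fst (hconn.headI_mem hl) hxO (Fin.ext h), hl₀h])))
      · exact Or.inr ⟨hl, h⟩
  -- the monomial identity
  have hSdecomp : S = insert l₀ ((S.filter (fun l => (l.headI.1 : ℕ) < (x.1 : ℕ)))
      ∪ downSet x S) := by
    ext l
    simp only [Finset.mem_insert, Finset.mem_union, Finset.mem_filter, hdownalt]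
    constructor
    · intro hl
      rcases lt_trichotomy ((l.headI.1 : ℕ)) ((x.1 : ℕ)) with h | h | h
      · exact Or.inr (Or.inl ⟨hl, h⟩)
      · exact Or.inl (hconn.eq_of_headI hl hl₀S
          (by rw [orig_eq_of_fst (hconn.headI_mem hl) hxO (Fin.ext h), hl₀h]))
      · exact Or.inr (Or.inr ⟨hl, h⟩)
    · rintro (rfl | (⟨hl, -⟩ | ⟨hl, -⟩))
      · exact hl₀S
      · exact hl
      · exact hl
  have hl₀notin : l₀ ∉ (S.filter (fun l => (l.headI.1 : ℕ) < (x.1 : ℕ))) ∪ downSet x S := by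
    rw [Finset.mem_union, hdownalt]
    rintro (h | h) <;>
    · have := (Finset.mem_filter.mp h).2
      rw [hl₀h] at this
      omega
  have hdisj : Disjoint (S.filter (fun l => (l.headI.1 : ℕ) < (x.1 : ℕ))) (downSet x S) := by
    rw [Finset.disjoint_left, hdownalt]
    intro l h1 h2
    have ha := (Finset.mem_filter.mp h1).2
    have hb := (Finset.mem_filter.mp h2).2
    omega
  have hxnotin : x ∉ l₀.tail := by
    have := hp₀.nodup
    rw [← headI_cons_tail hp₀.1, hl₀h] at this
    exact (List.nodup_cons.mp this).1
  have hcons : l₀ = x :: l₀.tail := by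
    conv_lhs => rw [← headI_cons_tail hp₀.1]
    rw [hl₀h]
  have hupath : uPath π l₀ = MvPolynomial.X x * uPath π l₀.tail := by
    conv_lhs => rw [hcons]
    unfold uPath
    rw [List.toFinset_cons, Finset.filter_insert, if_pos hxfree,
      Finset.prod_insert (by simp [hxnotin])]
  have hu : uSet π S = uSet π (upSet x S) * MvPolynomial.X x * uSet π (downSet x S) := by
    have e1 : ∏ l ∈ S, uPath π l = uPath π l₀ *
        ((∏ l ∈ S.filter (fun l => (l.headI.1 : ℕ) < (x.1 : ℕ)), uPath π l) *
          ∏ l ∈ downSet x S, uPath π l) := by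
      conv_lhs => rw [hSdecomp]
      rw [Finset.prod_insert hl₀notin, Finset.prod_union hdisj]
    have e2 : ∏ l ∈ upSet x S, uPath π l = uPath π l₀.tail *
        ∏ l ∈ S.filter (fun l => (l.headI.1 : ℕ) < (x.1 : ℕ)), uPath π l := by
      rw [hupalt, hQeq, Finset.prod_insert htailnQ]
    show ∏ l ∈ S, uPath π l = (∏ l ∈ upSet x S, uPath π l) * MvPolynomial.X x *
      ∏ l ∈ downSet x S, uPath π l
    rw [e1, e2, hupath]
    ring
  exact ⟨hconnup, hconndown, hdownSL, hglue, hu⟩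

/-! ### the backward (gluing) direction -/

private lemma bwd (hfree : IsFree π (d, j)) {x : Pos r} (hx : x ∈ O1 π d j)
    {S₁ S₂ : Finset (List (Pos r))}
    (h1 : Conn π (insert ((x.1 - 1, x.2) : Pos r)
        ((Orig π d j).filter fun o => (o.1 : ℕ) < (x.1 : ℕ)))
      ((Dest π d j).filter fun y => (y.1 : ℕ) < (x.1 : ℕ)) S₁)
    (h2 : Conn π ((Orig π d j).filter fun o => (x.1 : ℕ) < (o.1 : ℕ))
      ((Dest π d j).filter fun y => (x.1 : ℕ) ≤ (y.1 : ℕ)) S₂)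
    (h2L : ∀ l ∈ S₂, StartsLeft r l) :
    LC π d j (glueSet x ((x.1 - 1, x.2) : Pos r) S₁ S₂) ∧
    Fib x (glueSet x ((x.1 - 1, x.2) : Pos r) S₁ S₂) ∧
    upSet x (glueSet x ((x.1 - 1, x.2) : Pos r) S₁ S₂) = S₁ ∧
    downSet x (glueSet x ((x.1 - 1, x.2) : Pos r) S₁ S₂) = S₂ := by
  classical
  obtain ⟨hcolF, hxO, hxltd, ht1, htfree, htnot, hxfree, hxrow, hgd⟩ := O1_facts hfree hx
  set x' : Pos r := ((x.1 - 1, x.2) : Pos r) with hx'def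
  have hx'row : (x'.1 : ℕ) + 1 = (x.1 : ℕ) := ht1
  have hx'col : x'.2 = x.2 := rfl
  obtain ⟨l₁, hl₁S, hl₁h⟩ := h1.exists_headI (Finset.mem_insert_self x' _)
  have hl₁ne : l₁ ≠ [] := h1.ne_nil hl₁S
  have hl₁h? : l₁.head? = some x' := by rw [head?_eq hl₁ne, hl₁h]
  set G := glueSet x x' S₁ S₂ with hGdef
  have hGalt : G = (S₁.filter (fun l => l.head? ≠ some x')) ∪ {x :: l₁} ∪ S₂ := by
    rw [hGdef, glueSet]
    congr 1
    congr 1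
    have : S₁.filter (fun l => l.head? = some x') = {l₁} := by
      ext l
      simp only [Finset.mem_filter, Finset.mem_singleton]
      constructor
      · rintro ⟨hl, hh⟩
        refine h1.eq_of_headI hl hl₁S ?_
        rw [head?_eq (h1.ne_nil hl)] at hh
        rw [Option.some.inj hh, hl₁h]
      · rintro rfl
        exact ⟨hl₁S, hl₁h?⟩
    rw [this, Finset.image_singleton]
  -- row bounds
  have hS1row : ∀ l ∈ S₁, ∀ z ∈ l, (z.1 : ℕ) < (x.1 : ℕ) := by
    intro l hl z hz
    have hh := h1.headI_mem hl
    have hz1 := (le_headI (h1.path hl) hz).1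
    rw [Fin.le_def] at hz1
    rcases Finset.mem_insert.mp hh with he | hh
    · rw [he, hx'def] at hz1
      dsimp only at hz1
      omega
    · have := (Finset.mem_filter.mp hh).2
      omega
  have hS2row : ∀ l ∈ S₂, ∀ z ∈ l, (x.1 : ℕ) ≤ (z.1 : ℕ) := by
    intro l hl z hz
    have hh := h2.getLastI_mem hl
    have hz1 := (ge_getLastI (h2.path hl) hz).1
    rw [Fin.le_def] at hz1
    have := (Finset.mem_filter.mp hh).2
    omega
  have hS2head : ∀ l ∈ S₂, (x.1 : ℕ) < (l.headI.1 : ℕ) ∧ l.headI ∈ Orig π d j := by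
    intro l hl
    have hh := h2.headI_mem hl
    exact ⟨(Finset.mem_filter.mp hh).2, (Finset.mem_filter.mp hh).1⟩
  have hxnotS2 : ∀ l ∈ S₂, x ∉ l := by
    intro l hl hmem
    have := lastCol_mem_eq_headI (h2.path hl) (h2L l hl) hmem hcolF
    have h2h := (hS2head l hl).1
    rw [← this] at h2h
    exact lt_irrefl _ h2h
  have hxnotS1 : ∀ l ∈ S₁, x ∉ l := by
    intro l hl hmem
    exact lt_irrefl _ (hS1row l hl x hmem)
  -- the glued path
  have hstepxx' : Step π x x' := by
    right
    refine ⟨rfl, Fin.lt_def.mpr (by omega), Or.inr htfree, ?_⟩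
    intro a ha1 ha2
    rw [Fin.lt_def] at ha1 ha2
    rw [hx'def] at ha1
    dsimp only at ha1
    omega
  have hl₁cons : l₁ = x' :: l₁.tail := by
    conv_lhs => rw [← headI_cons_tail hl₁ne]
    rw [hl₁h]
  have hnpath : IsPath π (x :: l₁) := by
    refine ⟨List.cons_ne_nil _ _, ?_, ?_⟩
    · intro z hz
      rcases List.mem_cons.mp hz with rfl | hz
      · exact Or.inr hxfree
      · exact (h1.path hl₁S).2.1 z hz
    · rw [hl₁cons, List.Chain', List.isChain_cons_cons]
      exact ⟨hstepxx', by rw [← hl₁cons]; exact (h1.path hl₁S).2.2⟩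
  have hnglast : (x :: l₁).getLast? = l₁.getLast? := by
    rw [getLast?_eq (List.cons_ne_nil _ _), getLast?_eq hl₁ne,
      ← getLastI_tail (show (x :: l₁).tail ≠ [] from hl₁ne)]
    rfl
  -- membership in G
  have hGmem : ∀ l ∈ G, (l ∈ S₁ ∧ l.head? ≠ some x') ∨ l = x :: l₁ ∨ l ∈ S₂ := by
    intro l hl
    rw [hGalt] at hl
    rcases Finset.mem_union.mp hl with hl | hl
    · rcases Finset.mem_union.mp hl with hl | hl
      · obtain ⟨ha, hb⟩ := Finset.mem_filter.mp hl
        exact Or.inl ⟨ha, hb⟩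
      · exact Or.inr (Or.inl (Finset.mem_singleton.mp hl))
    · exact Or.inr (Or.inr hl)
  have hGpath : ∀ l ∈ G, IsPath π l := by
    intro l hl
    rcases hGmem l hl with ⟨hl, -⟩ | rfl | hl
    · exact h1.path hl
    · exact hnpath
    · exact h2.path hl
  -- disjointness of the glued system
  have hGdisj : ∀ l ∈ G, ∀ l' ∈ G, l ≠ l' → ∀ z ∈ l, z ∉ l' := by
    have key : ∀ l ∈ G, ∀ l' ∈ G, l ≠ l' → ∀ z ∈ l, z ∈ l' → False := by
      intro l hl l' hl' hne z hz hz'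
      rcases hGmem l hl with ⟨hlS, hlh⟩ | rfl | hlS <;>
        rcases hGmem l' hl' with ⟨hl'S, hl'h⟩ | rfl | hl'S
      · exact h1.2.1 l hlS l' hl'S hne z hz hz'
      · rcases List.mem_cons.mp hz' with rfl | hz'
        · exact hxnotS1 l hlS hz
        · have hne' : l ≠ l₁ := by
            intro he
            exact hlh (he ▸ hl₁h?)
          exact h1.2.1 l hlS l₁ hl₁S hne' z hz hz'
      · have ha := hS1row l hlS z hz
        have hb := hS2row l' hl'S z hz'
        omega
      · rcases List.mem_cons.mp hz with rfl | hz
        · exact hxnotS1 l' hl'S hz'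
        · have hne' : l₁ ≠ l' := by
            intro he
            exact hl'h (he ▸ hl₁h?)
          exact h1.2.1 l₁ hl₁S l' hl'S hne' z hz hz'
      · exact hne rfl
      · rcases List.mem_cons.mp hz with rfl | hz
        · exact hxnotS2 l' hl'S hz'
        · have ha := hS1row l₁ hl₁S z hz
          have hb := hS2row l' hl'S z hz'
          omega
      · have ha := hS1row l' hl'S z hz'
        have hb := hS2row l hlS z hz
        omega
      · rcases List.mem_cons.mp hz' with rfl | hz'
        · exact hxnotS2 l hlS hz
        · have ha := hS1row l₁ hl₁S z hz'
          have hb := hS2row l hlS z hz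
          omega
      · exact h2.2.1 l hlS l' hl'S hne z hz hz'
    intro l hl l' hl' hne z hz hz'
    exact key l hl l' hl' hne z hz hz'
  -- heads of the glued system
  have hGmem1 : ∀ l ∈ S₁, l.head? ≠ some x' → l ∈ G := by
    intro l hl hlh
    rw [hGalt]
    exact Finset.mem_union_left _ (Finset.mem_union_left _ (Finset.mem_filter.mpr ⟨hl, hlh⟩))
  have hGmemx : (x :: l₁) ∈ G := by
    rw [hGalt]
    exact Finset.mem_union_left _ (Finset.mem_union_right _ (Finset.mem_singleton_self _))
  have hGmem2 : ∀ l ∈ S₂, l ∈ G := by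
    intro l hl
    rw [hGalt]
    exact Finset.mem_union_right _ hl
  have hGheads : ∀ a : Pos r, a ∈ Orig π d j ↔ ∃ l ∈ G, l.head? = some a := by
    intro a
    constructor
    · intro ha
      rcases lt_trichotomy ((a.1 : ℕ)) ((x.1 : ℕ)) with h | h | h
      · obtain ⟨l, hl, hlh⟩ := h1.exists_headI
          (Finset.mem_insert_of_mem (Finset.mem_filter.mpr ⟨ha, h⟩))
        refine ⟨l, hGmem1 l hl ?_, by rw [head?_eq (h1.ne_nil hl), hlh]⟩
        rw [head?_eq (h1.ne_nil hl), hlh]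
        intro hc
        exact htnot ((Option.some.inj hc) ▸ ha)
      · refine ⟨x :: l₁, hGmemx, ?_⟩
        rw [orig_eq_of_fst ha hxO (Fin.ext h)]
        rfl
      · obtain ⟨l, hl, hlh⟩ := h2.exists_headI (Finset.mem_filter.mpr ⟨ha, h⟩)
        exact ⟨l, hGmem2 l hl, by rw [head?_eq (h2.ne_nil hl), hlh]⟩
    · rintro ⟨l, hl, hlh⟩
      rcases hGmem l hl with ⟨hlS, hlne⟩ | rfl | hlS
      · have hh := h1.headI_mem hlS
        rw [head?_eq (h1.ne_nil hlS)] at hlh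
        rw [← Option.some.inj hlh]
        rcases Finset.mem_insert.mp hh with he | hh
        · exact absurd (by rw [head?_eq (h1.ne_nil hlS), he]) hlne
        · exact (Finset.mem_filter.mp hh).1
      · have : a = x := by
          have : (x :: l₁).head? = some x := rfl
          rw [this] at hlh
          exact (Option.some.inj hlh).symm
        rw [this]
        exact hxO
      · have hh := (hS2head l hlS).2
        rw [head?_eq (h2.ne_nil hlS)] at hlh
        rw [← Option.some.inj hlh]
        exact hh
  -- lasts of the glued system
  have hGlasts : ∀ b : Pos r, b ∈ Dest π d j ↔ ∃ l ∈ G, l.getLast? = some b := by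
    intro b
    constructor
    · intro hb
      rcases lt_or_ge ((b.1 : ℕ)) ((x.1 : ℕ)) with h | h
      · obtain ⟨l, hl, hlb⟩ := h1.exists_getLastI (Finset.mem_filter.mpr ⟨hb, h⟩)
        by_cases hcase : l = l₁
        · refine ⟨x :: l₁, hGmemx, ?_⟩
          rw [hnglast, getLast?_eq hl₁ne, ← hcase, hlb]
        · refine ⟨l, hGmem1 l hl ?_, by rw [getLast?_eq (h1.ne_nil hl), hlb]⟩
          intro hc
          apply hcase
          refine h1.eq_of_headI hl hl₁S ?_
          rw [head?_eq (h1.ne_nil hl)] at hc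
          rw [Option.some.inj hc, hl₁h]
      · obtain ⟨l, hl, hlb⟩ := h2.exists_getLastI (Finset.mem_filter.mpr ⟨hb, h⟩)
        exact ⟨l, hGmem2 l hl, by rw [getLast?_eq (h2.ne_nil hl), hlb]⟩
    · rintro ⟨l, hl, hlb⟩
      rcases hGmem l hl with ⟨hlS, -⟩ | rfl | hlS
      · rw [getLast?_eq (h1.ne_nil hlS)] at hlb
        rw [← Option.some.inj hlb]
        exact (Finset.mem_filter.mp (h1.getLastI_mem hlS)).1
      · rw [hnglast, getLast?_eq hl₁ne] at hlb
        rw [← Option.some.inj hlb]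
        exact (Finset.mem_filter.mp (h1.getLastI_mem hl₁S)).1
      · rw [getLast?_eq (h2.ne_nil hlS)] at hlb
        rw [← Option.some.inj hlb]
        exact (Finset.mem_filter.mp (h2.getLastI_mem hlS)).1
  have hGconn : Conn π (Orig π d j) (Dest π d j) G := ⟨hGpath, hGdisj, hGheads, hGlasts⟩
  -- heads of G determine the part
  have hin2 : ∀ l ∈ G, (x.1 : ℕ) < (l.headI.1 : ℕ) → l ∈ S₂ := by
    intro l hl hlt
    rcases hGmem l hl with ⟨hlS, -⟩ | rfl | hlS
    · have := hS1row l hlS l.headI (headI_mem_self (h1.ne_nil hlS))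
      omega
    · have : (x :: l₁).headI = x := rfl
      rw [this] at hlt
      omega
    · exact hlS
  have hcoln : (x.2 : ℕ) = r - 1 := by rw [hcolF]; rfl
  have hnSU : StartsUp r (x :: l₁) := by
    refine ⟨x, rfl, hcoln, x', ?_, rfl⟩
    show l₁.head? = some x'
    exact hl₁h?
  -- LC for G
  have hLC : LC π d j G := by
    refine ⟨hGconn, ⟨x :: l₁, hGmemx, hnSU⟩, ?_⟩
    intro l hl hlh y hy
    have hrowd : (l.headI.1 : ℕ) = (d : ℕ) := by
      rw [head?_eq (hGconn.ne_nil hl)] at hlh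
      rw [Option.some.inj hlh, hgd]
    have hl2 : l ∈ S₂ := by
      apply hin2 l hl
      rw [Fin.lt_def] at hxltd
      omega
    have hSL := h2L l hl2
    have := hSL (gammaPos π d) hlh (by rw [hgd]; rfl) y hy
    exact this
  -- Fib for G
  have hFib : Fib x G := by
    refine ⟨⟨x :: l₁, hGmemx, rfl, hnSU⟩, ?_⟩
    intro l hl h hh hlt
    have hheq : h = l.headI := by
      rw [head?_eq (hGconn.ne_nil hl)] at hh
      exact (Option.mem_some_iff.mp hh).symm
    rw [hheq] at hlt
    exact h2L l (hin2 l hl hlt)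
  -- recovering the parts
  have hup : upSet x G = S₁ := by
    rw [upSet]
    have e1 : G.filter (fun l => ∀ h ∈ l.head?, (h.1 : ℕ) < (x.1 : ℕ))
        = S₁.filter (fun l => l.head? ≠ some x') := by
      ext l
      simp only [Finset.mem_filter]
      constructor
      · rintro ⟨hl, hq⟩
        have hq' := hq l.headI (by rw [head?_eq (hGconn.ne_nil hl)]; rfl)
        rcases hGmem l hl with ⟨hlS, hlne⟩ | rfl | hlS
        · exact ⟨hlS, hlne⟩
        · exfalso
          have : (x :: l₁).headI = x := rfl
          rw [this] at hq'
          omega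
        · exfalso
          have := (hS2head l hlS).1
          omega
      · rintro ⟨hl, hlne⟩
        refine ⟨hGmem1 l hl hlne, ?_⟩
        intro h hh
        have hheq : h = l.headI := by
          rw [head?_eq (h1.ne_nil hl)] at hh
          exact (Option.mem_some_iff.mp hh).symm
        rw [hheq]
        rcases Finset.mem_insert.mp (h1.headI_mem hl) with he | hm
        · exact absurd (by rw [head?_eq (h1.ne_nil hl), he]) hlne
        · exact (Finset.mem_filter.mp hm).2
    have e2 : G.filter (fun l => l.head? = some x) = {x :: l₁} := by
      ext l
      simp only [Finset.mem_filter, Finset.mem_singleton]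
      constructor
      · rintro ⟨hl, hh⟩
        have hheq : l.headI = x := by
          rw [head?_eq (hGconn.ne_nil hl)] at hh
          exact Option.some.inj hh
        rcases hGmem l hl with ⟨hlS, -⟩ | rfl | hlS
        · exfalso
          have := hS1row l hlS l.headI (headI_mem_self (h1.ne_nil hlS))
          rw [hheq] at this
          omega
        · rfl
        · exfalso
          have := (hS2head l hlS).1
          rw [hheq] at this
          omega
      · rintro rfl
        exact ⟨hGmemx, rfl⟩
    rw [e1, e2, Finset.image_singleton]
    have e3 : (x :: l₁).tail = l₁ := rfl
    rw [e3]
    ext l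
    simp only [Finset.mem_union, Finset.mem_filter, Finset.mem_singleton]
    constructor
    · rintro (⟨hl, -⟩ | rfl)
      · exact hl
      · exact hl₁S
    · intro hl
      by_cases hcase : l.head? = some x'
      · right
        refine h1.eq_of_headI hl hl₁S ?_
        rw [head?_eq (h1.ne_nil hl)] at hcase
        rw [Option.some.inj hcase, hl₁h]
      · exact Or.inl ⟨hl, hcase⟩
  have hdown : downSet x G = S₂ := by
    rw [downSet]
    ext l
    simp only [Finset.mem_filter]
    constructor
    · rintro ⟨hl, hp⟩
      refine hin2 l hl ?_
      exact hp l.headI (by rw [head?_eq (hGconn.ne_nil hl)]; rfl)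
    · intro hl
      refine ⟨hGmem2 l hl, ?_⟩
      intro h hh
      have hheq : h = l.headI := by
        rw [head?_eq (h2.ne_nil hl)] at hh
        exact (Option.mem_some_iff.mp hh).symm
      rw [hheq]
      exact (hS2head l hl).1
  exact ⟨hLC, hFib, hup, hdown⟩

end Aux

/-- Decomposition formula for `P₁(n_{π(d),j})`: writing
`O₁(n_{π(d),j}) = {n_{π(δ₁),r}, …, n_{π(δ_s),r}}` (positions `x = (δ_m, r-1)`),
`P₁(n_{π(d),j}) = Σ_m P({n_{π(δ_m−1),r}} ∪ O_{↑,δ_m−1} → D_{↑,δ_m−1})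
· n_{π(δ_m),r} · P_L(O_{↓,δ_m+1} → D_{↓,δ_m})`, where the empty sum is `0`. -/
theorem P1_decomposition {r : ℕ} [NeZero r] (π : Equiv.Perm (Fin r))
    (d j : Fin r) (hfree : IsFree π (d, j)) :
    P1sum π d j =
      ∑ x ∈ O1 π d j,
        Psum π
            (insert ((x.1 - 1, x.2) : Pos r)
              ((Orig π d j).filter fun o => (o.1 : ℕ) < (x.1 : ℕ)))
            ((Dest π d j).filter fun y => (y.1 : ℕ) < (x.1 : ℕ)) *
          MvPolynomial.X x *
          PLsum π ((Orig π d j).filter fun o => (x.1 : ℕ) < (o.1 : ℕ))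
            ((Dest π d j).filter fun y => (x.1 : ℕ) ≤ (y.1 : ℕ)) := by
  classical
  have hTfin : {S : Finset (List (Pos r)) | LC π d j S}.Finite :=
    (conn_finite π (Orig π d j) (Dest π d j)).subset (fun S hS => hS.1)
  have hLHS : P1sum π d j = ∑ S ∈ hTfin.toFinset, uSet π S := by
    rw [P1sum]
    exact finsum_mem_eq_finite_toFinset_sum _ hTfin
  have hmemT : ∀ S, S ∈ hTfin.toFinset ↔ LC π d j S := by
    intro S
    rw [Set.Finite.mem_toFinset]
    rfl
  rw [hLHS]
  have step1 : ∀ S ∈ hTfin.toFinset,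
      uSet π S = ∑ x ∈ (O1 π d j).filter (fun x' => Fib x' S), uSet π S := by
    intro S hS
    obtain ⟨x₀, ⟨hx₀O, hx₀F⟩, huniq⟩ := LC_exists_unique hfree ((hmemT S).mp hS)
    have hfil : (O1 π d j).filter (fun x' => Fib x' S) = {x₀} := by
      ext z
      simp only [Finset.mem_filter, Finset.mem_singleton]
      constructor
      · rintro ⟨hzO, hzF⟩
        exact huniq z ⟨hzO, hzF⟩
      · rintro rfl
        exact ⟨hx₀O, hx₀F⟩
    rw [hfil, Finset.sum_singleton]
  rw [Finset.sum_congr rfl step1]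
  have step2 : ∑ S ∈ hTfin.toFinset, ∑ x ∈ (O1 π d j).filter (fun x' => Fib x' S), uSet π S
      = ∑ x ∈ O1 π d j, ∑ S ∈ hTfin.toFinset.filter (fun S => Fib x S), uSet π S := by
    have e1 : ∀ S ∈ hTfin.toFinset,
        ∑ x ∈ (O1 π d j).filter (fun x' => Fib x' S), uSet π S
          = ∑ x ∈ O1 π d j, if Fib x S then uSet π S else 0 := by
      intro S _
      rw [Finset.sum_filter]
    rw [Finset.sum_congr rfl e1, Finset.sum_comm]
    refine Finset.sum_congr rfl ?_
    intro x _
    rw [Finset.sum_filter]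
  rw [step2]
  refine Finset.sum_congr rfl ?_
  intro x hxO1
  -- per-x identification
  have hC1fin : {S₁ : Finset (List (Pos r)) | Conn π (insert ((x.1 - 1, x.2) : Pos r)
      ((Orig π d j).filter fun o => (o.1 : ℕ) < (x.1 : ℕ)))
      ((Dest π d j).filter fun y => (y.1 : ℕ) < (x.1 : ℕ)) S₁}.Finite :=
    conn_finite π _ _
  have hC2fin : {S₂ : Finset (List (Pos r)) | Conn π
      ((Orig π d j).filter fun o => (x.1 : ℕ) < (o.1 : ℕ))
      ((Dest π d j).filter fun y => (x.1 : ℕ) ≤ (y.1 : ℕ)) S₂ ∧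
      ∀ l ∈ S₂, StartsLeft r l}.Finite :=
    (conn_finite π _ _).subset (fun S hS => hS.1)
  have hPsum : Psum π (insert ((x.1 - 1, x.2) : Pos r)
      ((Orig π d j).filter fun o => (o.1 : ℕ) < (x.1 : ℕ)))
      ((Dest π d j).filter fun y => (y.1 : ℕ) < (x.1 : ℕ))
      = ∑ S₁ ∈ hC1fin.toFinset, uSet π S₁ := by
    rw [Psum]
    exact finsum_mem_eq_finite_toFinset_sum _ hC1fin
  have hPLsum : PLsum π ((Orig π d j).filter fun o => (x.1 : ℕ) < (o.1 : ℕ))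
      ((Dest π d j).filter fun y => (x.1 : ℕ) ≤ (y.1 : ℕ))
      = ∑ S₂ ∈ hC2fin.toFinset, uSet π S₂ := by
    rw [PLsum]
    exact finsum_mem_eq_finite_toFinset_sum _ hC2fin
  rw [hPsum, hPLsum, Finset.sum_mul, Finset.sum_mul_sum]
  rw [← Finset.sum_product']
  refine Finset.sum_nbij' (fun S => (upSet x S, downSet x S))
    (fun p => glueSet x ((x.1 - 1, x.2) : Pos r) p.1 p.2) ?_ ?_ ?_ ?_ ?_
  · intro S hS
    rw [Finset.mem_filter, hmemT S] at hS
    obtain ⟨hconn1, hconn2, hSL2, -, -⟩ := fwd hfree hxO1 hS.1 hS.2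
    rw [Finset.mem_product, Set.Finite.mem_toFinset, Set.Finite.mem_toFinset]
    exact ⟨hconn1, hconn2, hSL2⟩
  · intro p hp
    rw [Finset.mem_product, Set.Finite.mem_toFinset, Set.Finite.mem_toFinset] at hp
    obtain ⟨hLC, hFib, -, -⟩ := bwd hfree hxO1 hp.1 hp.2.1 hp.2.2
    rw [Finset.mem_filter, hmemT _]
    exact ⟨hLC, hFib⟩
  · intro S hS
    rw [Finset.mem_filter, hmemT S] at hS
    exact (fwd hfree hxO1 hS.1 hS.2).2.2.2.1
  · intro p hp
    rw [Finset.mem_product, Set.Finite.mem_toFinset, Set.Finite.mem_toFinset] at hp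
    obtain ⟨-, -, hup, hdown⟩ := bwd hfree hxO1 hp.1 hp.2.1 hp.2.2
    exact Prod.ext hup hdown
  · intro S hS
    rw [Finset.mem_filter, hmemT S] at hS
    exact (fwd hfree hxO1 hS.1 hS.2).2.2.2.2
end

section
/- Let 2 ≤ j ≤ r−2 with n_{π(r),j} a free variable of wn, and let l ≤ r. If the set D^{(0)}_{j,l} := D₁(n_{π(r),j}) ∩ D_{↗,l}(n_{π(r),j}) is nonempty, then n_{l,r} is a free variable of wn (i.e. (l,r) ∈ Inv(π⁻¹)); furthermore, if 1_{π(k)} ∈ D^{(0)}_{j,l} then n_{π(k),r} is a free variable of wn. -/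
open Finset

/-! A destination of `D₁` lies in a row whose last-column entry is an origin directly below a free
variable of the last column. That free variable lies below the `1` of the last column, so the origin
is a nonzero entry other than that `1`, hence free. When the destination lies above and to the right
of `1_l`, the entry of row `π⁻¹(l)` in the last column is lower in the same column and in a row whose
`1` lies further left, so it is free as well. -/

lemma isNonzero_gammaPos {r : ℕ} (π : Equiv.Perm (Fin r)) (a : Fin r) :
    IsNonzero π (gammaPos π a) :=
  (Finset.mem_filter.1 (Finset.max'_mem (Finset.univ.filter fun c => IsNonzero π (a, c)) _)).2

lemma isNonzero_of_mem_Orig {r : ℕ} {π : Equiv.Perm (Fin r)} {d j : Fin r} {x : Pos r}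
    (hx : x ∈ Orig π d j) : IsNonzero π x := by
  rcases Finset.mem_insert.1 hx with rfl | hx
  · exact isNonzero_gammaPos π d
  · obtain ⟨a, -, rfl⟩ := Finset.mem_image.1 hx
    exact isNonzero_gammaPos π a

lemma snd_eq_of_mem_Dest {r : ℕ} {π : Equiv.Perm (Fin r)} {d j : Fin r} {y : Pos r}
    (hy : y ∈ Dest π d j) : y.2 = π y.1 := by
  obtain ⟨a, -, rfl⟩ := Finset.mem_image.1 hy
  rfl

lemma IsNonzero.isFree {r : ℕ} {π : Equiv.Perm (Fin r)} {p : Pos r} (hp : IsNonzero π p)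
    (hrow : π.symm p.2 < p.1) : IsFree π p := by
  refine hp.resolve_left fun hone => hrow.ne ?_
  rw [hone, Equiv.symm_apply_apply]

lemma IsFree.of_lt_of_apply_lt {r : ℕ} {π : Equiv.Perm (Fin r)} {a b c : Fin r}
    (h : IsFree π (a, c)) (hab : a < b) (hπ : π b < π a) : IsFree π (b, c) :=
  ⟨hπ.trans h.1, h.2.trans hab⟩

lemma isFree_last_of_mem_D1 {r : ℕ} [NeZero r] {π : Equiv.Perm (Fin r)} {j : Fin r}
    {y : Pos r} (hy : y ∈ D1 π (lastIdx r) j) : IsFree π (y.1, lastIdx r) := by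
  obtain ⟨-, x, hxO1, hxy⟩ := Finset.mem_filter.1 hy
  obtain ⟨hxO, hxlast, -, t, ht, htfree, -⟩ := Finset.mem_filter.1 hxO1
  have ht_lt : t < y.1 := by rw [Fin.lt_def]; omega
  obtain rfl : x = (y.1, lastIdx r) := Prod.ext hxy (Fin.ext hxlast)
  exact (isNonzero_of_mem_Orig hxO).isFree (htfree.2.trans ht_lt)

theorem D0_free_variables_general {r : ℕ} [NeZero r] (π : Equiv.Perm (Fin r))
    (j l : Fin r) :
    ((D1 π (lastIdx r) j ∩ Dne π (lastIdx r) j l).Nonempty →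
      IsFree π (π.symm l, lastIdx r)) ∧
    (∀ k : Fin r, ((k, π k) : Pos r) ∈ D1 π (lastIdx r) j ∩ Dne π (lastIdx r) j l →
      IsFree π (k, lastIdx r)) := by
  refine ⟨fun ⟨y, hy⟩ => ?_, fun k hk => isFree_last_of_mem_D1 (Finset.mem_inter.1 hk).1⟩
  obtain ⟨hyD1, hyNE⟩ := Finset.mem_inter.1 hy
  have hfree := isFree_last_of_mem_D1 hyD1
  rcases (Finset.mem_filter.1 hyNE).2 with rfl | ⟨hrow, hcol⟩
  · exact hfree
  · refine hfree.of_lt_of_apply_lt hrow ?_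
    rwa [Equiv.apply_symm_apply, ← snd_eq_of_mem_Dest (Finset.mem_filter.1 hyD1).1]

/-- If `D⁰_{j,l} = D₁(n_{π(r),j}) ∩ D_{↗,l}(n_{π(r),j})` is nonempty then
`n_{l,r}` is a free variable; moreover, if `1_{π(k)} ∈ D⁰_{j,l}` then
`n_{π(k),r}` is a free variable. -/
theorem D0_free_variables {r : ℕ} [NeZero r] (π : Equiv.Perm (Fin r))
    (j l : Fin r) (hj1 : 1 ≤ (j : ℕ)) (hj2 : (j : ℕ) ≤ r - 3)
    (hfr : IsFree π (lastIdx r, j)) :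
    ((D1 π (lastIdx r) j ∩ Dne π (lastIdx r) j l).Nonempty →
      IsFree π (π.symm l, lastIdx r)) ∧
    (∀ k : Fin r, ((k, π k) : Pos r) ∈ D1 π (lastIdx r) j ∩ Dne π (lastIdx r) j l →
      IsFree π (k, lastIdx r)) :=
  D0_free_variables_general π j l
end
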